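/- arXiv:1611.02589 — 8 statements merged into one kernel-verified Lean document; each statement's English description precedes it below -/
import Mathlib

section
/- There exist a constant C and a single decoder relation D : ℕ → ℕ → Bool with the following property: for every finite tree order (X, ≤) with n = |X| ≥ 4 elements, there is an injective labeling L : X → ℕ such that L(x) ≤ C · n · (log₂ n)³ · (log₂ log₂ n)^C for every x ∈ X, and for all u, v ∈ X one has u ≤ v if and only if D(L(v), L(u)) = true. (Equivalently: there is an ancestry-labeling scheme for the family of all rooted forests whose labels on n-node forests use log₂ n + 3 log₂ log₂ n + O(log₂ log₂ log₂ n) bits.) -/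
/-!
Lay the forest out depth-first, visiting the children of every node by increasing subtree size.
Along a heavy path (each node the largest child of the next) the descendants of a node `v` are
then exactly the nodes from `v` up to the end of the subtree of the path's top, so a label only
has to store the position of `v` and the length of this interval. The length is rounded up to the
form `k * 2 ^ e` with `k ≤ 2 Q` and `e ≤ log₂ n + 1`, which leaves `O((log n)²)` choices per
position. Rounding up is harmless because the subtree of every top `t` (a root or a light child)
is followed by about `|region t| / Q` empty positions. Every node has at most `log₂ n` light
ancestors, each less than half the size of its parent, so for `Q = 2 (log₂ n + 1)` all gaps
together take at most `n` positions and positions stay below `2 n`. Labels of forests with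
`⌊log₂ n⌋ = m` fill a block `[R, 2 R)` that depends only on `m`, from which the decoder recovers
`m` and with it the layout of the label.
-/

/-- A partial order is a *tree order* if any two incomparable elements
have no common upper bound; equivalently, the set of elements above any
given element is a chain. -/
def IsTreeOrder (X : Type*) [PartialOrder X] : Prop :=
  ∀ x y z : X, x ≤ y → x ≤ z → (y ≤ z ∨ z ≤ y)

namespace List
variable {α : Type*} [LinearOrder α] {a b c : List α}

theorem lt_of_isPrefix_of_ne (h : a <+: b) (hne : a ≠ b) : a < b :=
  (lt_or_gt_of_ne hne).resolve_right h.le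

theorem lt_iff_lt_of_isPrefix (hac : a <+: c) (hab : ¬ a <+: b) : b < a ↔ b < c := by
  induction a generalizing b c with
  | nil => exact absurd nil_prefix hab
  | cons x a ih =>
    obtain ⟨c, rfl⟩ : ∃ c', c = x :: c' := by
      cases c with
      | nil => simp at hac
      | cons y c' => exact ⟨c', (cons_prefix_cons.mp hac).1 ▸ rfl⟩
    cases b with
    | nil => simp [nil_lt_cons]
    | cons y b =>
      simp only [cons_prefix_cons, true_and, not_and] at hac hab
      simp only [cons_lt_cons_iff]
      by_cases hyx : y = x
      · subst hyx; simp [ih hac (hab rfl)]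
      · simp [hyx]

theorem lt_iff_lt_of_isPrefix' (hac : a <+: c) (hab : ¬ a <+: b) : a < b ↔ c < b := by
  have hba : b ≠ a := by rintro rfl; exact hab (prefix_refl _)
  have hbc : b ≠ c := by rintro rfl; exact hab hac
  rw [← not_iff_not, not_lt, not_lt, le_iff_lt_or_eq, le_iff_lt_or_eq,
    lt_iff_lt_of_isPrefix hac hab]
  simp [hba, hbc]

theorem lt_of_append_singleton_isPrefix {l : List α} {x y : α} (ha : l ++ [x] <+: a)
    (hb : l ++ [y] <+: b) (hxy : x < y) : a < b := by
  obtain ⟨s, rfl⟩ := ha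
  obtain ⟨t, rfl⟩ := hb
  simpa using append_left_lt (l₁ := l) (cons_lt_cons_iff.mpr (Or.inl hxy) : x :: s < y :: t)

end List

open Finset

lemma Nat.log_lt_log_of_two_mul_le {a b : ℕ} (ha : 0 < a) (h : 2 * a ≤ b) :
    Nat.log 2 a < Nat.log 2 b := by
  have := Nat.log_mono_right (b := 2) (h.trans_eq' (mul_comm 2 a))
  rw [Nat.log_mul_base one_lt_two ha.ne'] at this
  omega

lemma Finset.card_le_log_of_doubling {ι : Type*} (s : Finset ι) (f : ι → ℕ) {N : ℕ}
    (hf : ∀ i ∈ s, 0 < f i) (hN : ∀ i ∈ s, 2 * f i ≤ N)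
    (hs : (s : Set ι).Pairwise fun i j => 2 * f i ≤ f j ∨ 2 * f j ≤ f i) :
    #s ≤ Nat.log 2 N := by
  refine (card_le_card_of_injOn (fun i => Nat.log 2 (f i)) (t := range (Nat.log 2 N))
    (fun i hi => ?_) fun i hi j hj hij => ?_).trans_eq (card_range _)
  · exact mem_range.mpr (Nat.log_lt_log_of_two_mul_le (hf i hi) (hN i hi))
  · by_contra hne
    rcases hs hi hj hne with h | h
    · exact (Nat.log_lt_log_of_two_mul_le (hf i hi) h).ne hij
    · exact (Nat.log_lt_log_of_two_mul_le (hf j hj) h).ne hij.symm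

namespace AncestryLabeling

section Rounding

def roundExp (Q b : ℕ) : ℕ := Nat.log 2 (b / Q)

def roundMant (Q b : ℕ) : ℕ := b ⌈/⌉ 2 ^ roundExp Q b

def roundUp (Q b : ℕ) : ℕ := roundMant Q b * 2 ^ roundExp Q b

variable {Q b : ℕ}

lemma le_roundUp : b ≤ roundUp Q b := by
  rw [roundUp, mul_comm]
  exact le_smul_ceilDiv (Nat.two_pow_pos _)

lemma roundUp_le : roundUp Q b ≤ b + b / Q := by
  have hceil : roundUp Q b ≤ b + 2 ^ roundExp Q b - 1 := by
    rw [roundUp, roundMant, Nat.ceilDiv_eq_add_pred_div]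
    exact Nat.div_mul_le_self _ _
  rcases Nat.eq_zero_or_pos (b / Q) with h | h
  · have : roundExp Q b = 0 := by simp [roundExp, h]
    rw [this] at hceil
    omega
  · have := Nat.pow_log_le_self 2 h.ne'
    rw [roundExp] at hceil
    omega

lemma roundMant_le (hQ : 0 < Q) : roundMant Q b ≤ 2 * Q := by
  rw [roundMant, ceilDiv_le_iff_le_mul (Nat.two_pow_pos _)]
  have := (Nat.div_lt_iff_lt_mul hQ).mp (Nat.lt_pow_succ_log_self one_lt_two (b / Q))
  rw [roundExp]
  rw [pow_succ] at this
  linarith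

lemma roundExp_le : roundExp Q b ≤ Nat.log 2 b :=
  Nat.log_mono_right (Nat.div_le_self _ _)

end Rounding

section Encoding

def slack (m : ℕ) : ℕ := 2 * (m + 1)

def mantBound (m : ℕ) : ℕ := 2 * slack m + 1

def codeBound (m : ℕ) : ℕ := (m + 2) * mantBound m

def classStart (m : ℕ) : ℕ := 2 ^ (m + 2) * codeBound m

def encodeLabel (m p e k : ℕ) : ℕ := classStart m + (p * codeBound m + (e * mantBound m + k))

def labelClass (l : ℕ) : ℕ := Nat.findGreatest (fun k => classStart k ≤ l) l

def labelOffset (l : ℕ) : ℕ := l - classStart (labelClass l)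

def labelPos (l : ℕ) : ℕ := labelOffset l / codeBound (labelClass l)

def labelSpan (l : ℕ) : ℕ :=
  let m := labelClass l
  let code := labelOffset l % codeBound m
  code % mantBound m * 2 ^ (code / mantBound m)

def decoder (lv lu : ℕ) : Bool :=
  decide (labelPos lv ≤ labelPos lu ∧ labelPos lu < labelPos lv + labelSpan lv)

lemma codeBound_mono : Monotone codeBound := fun a b h => by
  unfold codeBound mantBound slack
  gcongr

lemma two_mul_classStart_le_succ (m : ℕ) : 2 * classStart m ≤ classStart (m + 1) := by
  unfold classStart
  calc 2 * (2 ^ (m + 2) * codeBound m) = 2 ^ (m + 1 + 2) * codeBound m := by ring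
    _ ≤ 2 ^ (m + 1 + 2) * codeBound (m + 1) := by gcongr; exact codeBound_mono m.le_succ

lemma classStart_strictMono : StrictMono classStart :=
  strictMono_nat_of_lt_succ fun m => by
    have := two_mul_classStart_le_succ m
    have : 0 < classStart m := by unfold classStart codeBound mantBound; positivity
    omega

lemma labelClass_eq {m l : ℕ} (h₁ : classStart m ≤ l) (h₂ : l < classStart (m + 1)) :
    labelClass l = m := by
  have hm : m ≤ l := (classStart_strictMono.id_le m).trans h₁
  refine Nat.findGreatest_eq_iff.mpr ⟨hm, fun _ => h₁, fun k hk _ hkl => ?_⟩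
  exact absurd (hkl.trans_lt h₂) (not_lt.mpr (classStart_strictMono.monotone hk))

variable {m p e k : ℕ}

lemma code_lt (he : e < m + 2) (hk : k < mantBound m) : e * mantBound m + k < codeBound m := by
  unfold codeBound
  nlinarith

lemma encodeLabel_lt (hp : p < 2 ^ (m + 2)) (he : e < m + 2) (hk : k < mantBound m) :
    encodeLabel m p e k < 2 * classStart m := by
  have := code_lt he hk
  unfold encodeLabel classStart
  nlinarith

lemma labelClass_encodeLabel (hp : p < 2 ^ (m + 2)) (he : e < m + 2) (hk : k < mantBound m) :
    labelClass (encodeLabel m p e k) = m :=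
  labelClass_eq (Nat.le_add_right _ _)
    ((encodeLabel_lt hp he hk).trans_le (two_mul_classStart_le_succ m))

lemma labelPos_encodeLabel (hp : p < 2 ^ (m + 2)) (he : e < m + 2) (hk : k < mantBound m) :
    labelPos (encodeLabel m p e k) = p := by
  rw [labelPos, labelOffset, labelClass_encodeLabel hp he hk, encodeLabel, Nat.add_sub_cancel_left,
    Nat.add_comm, Nat.add_mul_div_right _ _ (by unfold codeBound mantBound; positivity),
    Nat.div_eq_of_lt (code_lt he hk), zero_add]

lemma labelSpan_encodeLabel (hp : p < 2 ^ (m + 2)) (he : e < m + 2) (hk : k < mantBound m) :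
    labelSpan (encodeLabel m p e k) = k * 2 ^ e := by
  have hmant : 0 < mantBound m := by unfold mantBound; positivity
  simp only [labelSpan, labelOffset, labelClass_encodeLabel hp he hk]
  rw [encodeLabel, Nat.add_sub_cancel_left, Nat.add_comm, Nat.add_mul_mod_self_right,
    Nat.mod_eq_of_lt (code_lt he hk), Nat.add_comm, Nat.add_mul_mod_self_right, Nat.mod_eq_of_lt hk,
    Nat.add_mul_div_right _ _ hmant, Nat.div_eq_of_lt hk, zero_add]

lemma two_mul_classStart_le (hm : 2 ≤ m) : 2 * classStart m ≤ 112 * 2 ^ m * m ^ 3 := by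
  unfold classStart codeBound mantBound slack
  rw [pow_add]
  have h₁ : m + 2 ≤ 2 * m := by omega
  have h₂ : 2 * (2 * (m + 1)) + 1 ≤ 7 * m := by omega
  have h₃ : m ^ 2 ≤ m ^ 3 := Nat.pow_le_pow_right (by omega) (by norm_num)
  calc 2 * (2 ^ m * 2 ^ 2 * ((m + 2) * (2 * (2 * (m + 1)) + 1)))
      ≤ 2 * (2 ^ m * 2 ^ 2 * ((2 * m) * (7 * m))) := by gcongr
    _ = 112 * 2 ^ m * m ^ 2 := by ring
    _ ≤ 112 * 2 ^ m * m ^ 3 := by gcongr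

end Encoding

open scoped Classical

noncomputable section

variable {X : Type*} [PartialOrder X] [Fintype X] {u v x y z : X}

section Tree

def subtree (x : X) : Finset X := {y | y ≤ x}

def size (x : X) : ℕ := #(subtree x)

@[simp] lemma mem_subtree : y ∈ subtree x ↔ y ≤ x := by simp [subtree]

lemma size_pos (x : X) : 0 < size x := card_pos.mpr ⟨x, mem_subtree.mpr le_rfl⟩

lemma size_le_card (x : X) : size x ≤ Fintype.card X := card_le_univ _

lemma size_mono (h : u ≤ v) : size u ≤ size v :=
  card_le_card fun _ hz => mem_subtree.mpr ((mem_subtree.mp hz).trans h)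

lemma size_lt_size (h : u < v) : size u < size v :=
  card_lt_card <| (ssubset_iff_of_subset fun z hz => mem_subtree.mpr
    ((mem_subtree.mp hz).trans h.le)).mpr ⟨v, by simpa using h.not_ge⟩

lemma le_of_size_le (hX : IsTreeOrder X) (hy : x ≤ y) (hz : x ≤ z) (h : size y ≤ size z) :
    y ≤ z := by
  rcases hX x y z hy hz with hyz | hzy
  · exact hyz
  · rcases hzy.lt_or_eq with hlt | rfl
    · exact absurd h (size_lt_size hlt).not_ge
    · exact le_rfl

lemma disjoint_subtree (hX : IsTreeOrder X) (hxy : ¬ x ≤ y) (hyx : ¬ y ≤ x) :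
    Disjoint (subtree x) (subtree y) :=
  disjoint_left.mpr fun z hzx hzy =>
    (hX z x y (mem_subtree.mp hzx) (mem_subtree.mp hzy)).elim hxy hyx

lemma exists_lt_forall_size_le (h : ¬ IsMax x) :
    ∃ p, x < p ∧ ∀ y, x < y → size p ≤ size y := by
  obtain ⟨p, hp⟩ := not_isMax_iff.mp h
  obtain ⟨q, hq, hmin⟩ := exists_min_image ({p | x < p} : Finset X) size ⟨p, by simpa using hp⟩
  exact ⟨q, by simpa using hq, fun y hy => hmin y (by simpa using hy)⟩

def parent (x : X) : X := if h : IsMax x then x else (exists_lt_forall_size_le h).choose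

lemma parent_spec (h : ¬ IsMax x) : x < parent x ∧ ∀ y, x < y → size (parent x) ≤ size y := by
  rw [parent, dif_neg h]
  exact (exists_lt_forall_size_le h).choose_spec

lemma lt_parent (h : ¬ IsMax x) : x < parent x := (parent_spec h).1

lemma parent_le (hX : IsTreeOrder X) (h : x < y) : parent x ≤ y :=
  le_of_size_le hX (lt_parent (not_isMax_of_lt h)).le h.le
    ((parent_spec (not_isMax_of_lt h)).2 y h)

lemma exists_child_of_lt (hX : IsTreeOrder X) (h : u < y) :
    ∃ c, u ≤ c ∧ c < y ∧ parent c = y := by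
  obtain ⟨c, hc, hmax⟩ := exists_max_image ({z | u ≤ z ∧ z < y} : Finset X) size
    ⟨u, by simpa using h⟩
  simp only [mem_filter, mem_univ, true_and] at hc hmax
  refine ⟨c, hc.1, hc.2, (parent_le hX hc.2).lt_or_eq.resolve_left fun hlt => ?_⟩
  have hcp := lt_parent (not_isMax_of_lt hc.2)
  exact (size_lt_size hcp).not_ge (hmax _ ⟨hc.1.trans hcp.le, hlt⟩)

lemma not_le_of_parent_eq (hX : IsTreeOrder X) (hy : ¬ IsMax y) (hxy : x ≠ y)
    (h : parent x = parent y) : ¬ x ≤ y := fun hle =>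
  (lt_parent hy).not_ge (h ▸ parent_le hX (lt_of_le_of_ne hle hxy))

def key (x : X) : ℕ ×ₗ ℕ := toLex (size x, (Fintype.equivFin X x : ℕ))

lemma key_injective : Function.Injective (key (X := X)) := fun _ _ h =>
  (Fintype.equivFin X).injective (Fin.ext (congrArg (fun k => (ofLex k).2) h))

lemma size_le_of_key_lt (h : key x < key y) : size x ≤ size y := by
  rcases Prod.Lex.toLex_lt_toLex.mp h with h | ⟨h, -⟩ <;> omega

def IsHeavy (c : X) : Prop :=
  ¬ IsMax c ∧ ∀ c', c' < parent c → parent c' = parent c → key c' ≤ key c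

lemma two_mul_size_lt_size_parent (hX : IsTreeOrder X) {c : X} (hc : ¬ IsMax c)
    (hlight : ¬ IsHeavy c) : 2 * size c < size (parent c) := by
  obtain ⟨c', hc'p, hpar, hkey⟩ : ∃ c', c' < parent c ∧ parent c' = parent c ∧ key c < key c' := by
    simpa [IsHeavy, hc] using hlight
  have hne : c ≠ c' := by rintro rfl; exact lt_irrefl _ hkey
  have hc' : ¬ IsMax c' := not_isMax_of_lt hc'p
  have hsub : subtree c ∪ subtree c' ⊆ (subtree (parent c)).erase (parent c) := by
    intro z hz
    simp only [mem_union, mem_subtree, mem_erase] at hz ⊢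
    rcases hz with hz | hz
    · exact ⟨(hz.trans_lt (lt_parent hc)).ne, hz.trans (lt_parent hc).le⟩
    · exact ⟨(hz.trans_lt hc'p).ne, hz.trans hc'p.le⟩
  have hcard := card_le_card hsub
  rw [card_union_of_disjoint (disjoint_subtree hX (not_le_of_parent_eq hX hc' hne hpar.symm)
    (not_le_of_parent_eq hX hc hne.symm hpar)), card_erase_of_mem (by simp)] at hcard
  have := size_le_of_key_lt hkey
  have := size_pos (parent c)
  unfold size at *
  omega

lemma two_mul_size_lt_of_lt (hX : IsTreeOrder X) {d e : X} (hd : ¬ IsHeavy d) (hde : d < e) :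
    2 * size d < size e :=
  (two_mul_size_lt_size_parent hX (not_isMax_of_lt hde) hd).trans_le
    (size_mono (parent_le hX hde))

lemma card_le_log_of_not_isHeavy (hX : IsTreeOrder X) {s : Finset X} {N : ℕ}
    (hs : ∀ d ∈ s, ¬ IsHeavy d ∧ u ≤ d) (hN : ∀ d ∈ s, 2 * size d ≤ N) : #s ≤ Nat.log 2 N := by
  refine card_le_log_of_doubling s size (fun d _ => size_pos d) hN fun d hd e he hne => ?_
  rcases hX u d e (hs d hd).2 (hs e he).2 with hde | hed
  · exact .inl (two_mul_size_lt_of_lt hX (hs d hd).1 (lt_of_le_of_ne hde hne)).le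
  · exact .inr (two_mul_size_lt_of_lt hX (hs e he).1 (lt_of_le_of_ne hed hne.symm)).le

lemma sum_size_le (D S : Finset X) (B : ℕ) (hS : ∀ d ∈ D, subtree d ⊆ S)
    (hB : ∀ u ∈ S, #{d ∈ D | u ≤ d} ≤ B) : ∑ d ∈ D, size d ≤ #S * B := by
  calc ∑ d ∈ D, size d = ∑ d ∈ D, #(S.bipartiteAbove (fun d u => u ≤ d) d) := by
        refine sum_congr rfl fun d hd => congrArg card ?_
        ext u
        simpa using fun hu => hS d hd (mem_subtree.mpr hu)
    _ = ∑ u ∈ S, #(D.bipartiteBelow (fun d u => u ≤ d) u) :=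
        sum_card_bipartiteAbove_eq_sum_card_bipartiteBelow _
    _ ≤ #S * B := (sum_le_card_nsmul S _ B hB).trans_eq (smul_eq_mul _ _)

def topsBelow (c : X) : Finset X := {d | d < c ∧ ¬ IsHeavy d}

@[simp] lemma mem_topsBelow {c d : X} : d ∈ topsBelow c ↔ d < c ∧ ¬ IsHeavy d := by
  simp [topsBelow]

lemma sum_size_topsBelow_le (hX : IsTreeOrder X) (c : X) :
    ∑ d ∈ topsBelow c, size d ≤ size c * Nat.log 2 (size c) := by
  refine sum_size_le _ _ _ (fun d hd z hz => ?_) fun u _ => ?_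
  · rw [mem_topsBelow] at hd
    exact mem_subtree.mpr ((mem_subtree.mp hz).trans hd.1.le)
  · refine card_le_log_of_not_isHeavy hX (u := u) (fun d hd => ?_) fun d hd => ?_ <;>
      simp only [mem_filter, mem_topsBelow] at hd
    · exact ⟨hd.1.2, hd.2⟩
    · exact (two_mul_size_lt_of_lt hX hd.1.2 hd.1.1).le

lemma sum_size_tops_le (hX : IsTreeOrder X) :
    ∑ d ∈ ({d | ¬ IsHeavy d} : Finset X), size d ≤
      Fintype.card X * (Nat.log 2 (Fintype.card X) + 1) := by
  rcases isEmpty_or_nonempty X with hX₀ | hX₀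
  · simp
  have hcard : Fintype.card X ≠ 0 := Fintype.card_ne_zero
  refine sum_size_le _ univ _ (fun _ _ => subset_univ _) fun u _ => ?_
  rw [← Nat.log_mul_base one_lt_two hcard]
  refine card_le_log_of_not_isHeavy hX (u := u) (fun d hd => ?_) fun d _ => ?_
  · simpa using hd
  · linarith [size_le_card d]

end Tree

section DepthFirst

-- The lexicographic order on `pathKeys` is the depth-first order that visits the children of
-- each node by increasing `key`, hence the heavy child last.
def pathKeys (x : X) : List (ℕ ×ₗ ℕ) :=
  if IsMax x then [key x] else pathKeys (parent x) ++ [key x]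
termination_by Fintype.card X - size x
decreasing_by
  have := size_lt_size (lt_parent ‹¬ IsMax x›)
  have := size_le_card (parent x)
  omega

lemma pathKeys_of_isMax (h : IsMax x) : pathKeys x = [key x] := by
  rw [pathKeys, if_pos h]

lemma pathKeys_of_not_isMax (h : ¬ IsMax x) : pathKeys x = pathKeys (parent x) ++ [key x] := by
  rw [pathKeys, if_neg h]

lemma exists_pathKeys_eq (x : X) : ∃ l, pathKeys x = l ++ [key x] := by
  by_cases h : IsMax x
  · exact ⟨[], pathKeys_of_isMax h⟩
  · exact ⟨_, pathKeys_of_not_isMax h⟩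

lemma pathKeys_injective : Function.Injective (pathKeys (X := X)) := fun x y h => by
  obtain ⟨l, hl⟩ := exists_pathKeys_eq x
  obtain ⟨l', hl'⟩ := exists_pathKeys_eq y
  rw [hl, hl'] at h
  exact key_injective (List.singleton_inj.mp (List.append_inj' h rfl).2)

lemma le_of_isPrefix_pathKeys (h : pathKeys v <+: pathKeys u) : u ≤ v := by
  induction u using WellFoundedGT.induction with
  | _ u ih =>
  by_cases hu : IsMax u
  · have hlen : (pathKeys u).length ≤ (pathKeys v).length := by
      obtain ⟨l, hl⟩ := exists_pathKeys_eq v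
      simp [pathKeys_of_isMax hu, hl]
    exact (pathKeys_injective (h.eq_of_length_le hlen)).ge
  · rw [pathKeys_of_not_isMax hu, List.prefix_concat_iff] at h
    rcases h with h | h
    · exact (pathKeys_injective (h.trans (pathKeys_of_not_isMax hu).symm)).ge
    · exact (lt_parent hu).le.trans (ih _ (lt_parent hu) h)

lemma isPrefix_pathKeys (hX : IsTreeOrder X) (h : u ≤ v) : pathKeys v <+: pathKeys u := by
  induction u using WellFoundedGT.induction with
  | _ u ih =>
  rcases h.lt_or_eq with hlt | rfl
  · have hu := not_isMax_of_lt hlt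
    rw [pathKeys_of_not_isMax hu]
    exact (ih _ (lt_parent hu) (parent_le hX hlt)).trans (List.prefix_append _ _)
  · exact List.prefix_refl _

lemma pathKeys_lt_of_lt (hX : IsTreeOrder X) (h : u < v) : pathKeys v < pathKeys u :=
  List.lt_of_isPrefix_of_ne (isPrefix_pathKeys hX h.le) (pathKeys_injective.ne h.ne')

lemma not_pathKeys_lt_of_le (hX : IsTreeOrder X) (h : u ≤ v) : ¬ pathKeys u < pathKeys v :=
  (isPrefix_pathKeys hX h).le

lemma pathKeys_lt_iff_of_le (hX : IsTreeOrder X) (hz : z ≤ x) (hy : ¬ y ≤ x) :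
    pathKeys y < pathKeys x ↔ pathKeys y < pathKeys z :=
  List.lt_iff_lt_of_isPrefix (isPrefix_pathKeys hX hz) (mt le_of_isPrefix_pathKeys hy)

lemma lt_pathKeys_iff_of_le (hX : IsTreeOrder X) (hz : z ≤ x) (hy : ¬ y ≤ x) :
    pathKeys x < pathKeys y ↔ pathKeys z < pathKeys y :=
  List.lt_iff_lt_of_isPrefix' (isPrefix_pathKeys hX hz) (mt le_of_isPrefix_pathKeys hy)

def heavyTop (v : X) : X := if IsHeavy v then heavyTop (parent v) else v
termination_by Fintype.card X - size v
decreasing_by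
  have := size_lt_size (lt_parent (‹IsHeavy v›).1)
  have := size_le_card (parent v)
  omega

lemma le_heavyTop (v : X) : v ≤ heavyTop v := by
  induction v using WellFoundedGT.induction with
  | _ v ih =>
  rw [heavyTop]
  split_ifs with h
  · exact (lt_parent h.1).le.trans (ih _ (lt_parent h.1))
  · exact le_rfl

lemma not_isHeavy_heavyTop (v : X) : ¬ IsHeavy (heavyTop v) := by
  induction v using WellFoundedGT.induction with
  | _ v ih =>
  rw [heavyTop]
  split_ifs with h
  · exact ih _ (lt_parent h.1)
  · exact h

lemma isHeavy_of_le_of_lt_heavyTop (hX : IsTreeOrder X) (hvz : v ≤ z) (hz : z < heavyTop v) :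
    IsHeavy z := by
  induction v using WellFoundedGT.induction with
  | _ v ih =>
  rw [heavyTop] at hz
  split_ifs at hz with h
  · rcases hvz.lt_or_eq with hlt | rfl
    · exact ih _ (lt_parent h.1) (parent_le hX hlt) hz
    · exact h
  · exact absurd (hvz.trans_lt hz) (lt_irrefl v)

lemma pathKeys_lt_of_le_heavyTop (hX : IsTreeOrder X) (hu : u ≤ heavyTop v) (huv : ¬ u ≤ v)
    (hvu : ¬ v ≤ u) : pathKeys u < pathKeys v := by
  obtain ⟨b, hb, hbmax⟩ := exists_max_image ({z | v ≤ z ∧ ¬ u ≤ z} : Finset X) size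
    ⟨v, by simpa using huv⟩
  simp only [mem_filter, mem_univ, true_and] at hb hbmax
  -- `b` is the highest ancestor of `v` not above `u`. It lies on the heavy path below
  -- `heavyTop v`, so the sibling `c` of `b` above `u` has a smaller key.
  have hbtop : b < heavyTop v := lt_of_le_of_ne
    ((hX v b _ hb.1 (le_heavyTop v)).resolve_right fun h => hb.2 (hu.trans h))
    (by rintro rfl; exact hb.2 hu)
  have hheavy := isHeavy_of_le_of_lt_heavyTop hX hb.1 hbtop
  have hbp := lt_parent hheavy.1
  have hup : u < parent b := by
    refine lt_of_le_of_ne (not_not.mp fun h => ?_) fun h => hvu (h ▸ hb.1.trans hbp.le)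
    exact (size_lt_size hbp).not_ge (hbmax _ ⟨hb.1.trans hbp.le, h⟩)
  obtain ⟨c, huc, hcp, hpc⟩ := exists_child_of_lt hX hup
  have hkey : key c < key b :=
    lt_of_le_of_ne (hheavy.2 c hcp hpc) fun h => hb.2 (key_injective h ▸ huc)
  refine List.lt_of_append_singleton_isPrefix (l := pathKeys (parent b)) ?_ ?_ hkey
  · rw [← hpc, ← pathKeys_of_not_isMax (not_isMax_of_lt hcp)]
    exact isPrefix_pathKeys hX huc
  · rw [← pathKeys_of_not_isMax hheavy.1]
    exact isPrefix_pathKeys hX hb.1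

end DepthFirst

section Layout

variable (Q : ℕ)

-- Every top `d` is followed by `gap Q d` empty positions; `regionLength Q c` is the room taken
-- by the subtree of `c` together with the gaps of the tops strictly below `c`.
def regionLength (c : X) : ℕ :=
  size c + ∑ d ∈ (topsBelow c).attach, regionLength d.1 / Q
termination_by size c
decreasing_by exact size_lt_size (mem_filter.mp d.2).2.1

def gap (c : X) : ℕ := regionLength Q c / Q

lemma regionLength_eq (c : X) : regionLength Q c = size c + ∑ d ∈ topsBelow c, gap Q d := by
  rw [regionLength, ← sum_attach (topsBelow c)]
  rfl

def dfsBefore (x : X) : Finset X := {z | pathKeys z < pathKeys x}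

def finishedBefore (x : X) : Finset X := {d | ¬ IsHeavy d ∧ pathKeys d < pathKeys x ∧ ¬ x ≤ d}

def position (x : X) : ℕ := #(dfsBefore x) + ∑ d ∈ finishedBefore x, gap Q d

@[simp] lemma mem_dfsBefore : z ∈ dfsBefore x ↔ pathKeys z < pathKeys x := by simp [dfsBefore]

@[simp] lemma mem_finishedBefore :
    z ∈ finishedBefore x ↔ ¬ IsHeavy z ∧ pathKeys z < pathKeys x ∧ ¬ x ≤ z := by
  simp [finishedBefore]

lemma disjoint_dfsBefore_subtree (hX : IsTreeOrder X) (t : X) :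
    Disjoint (dfsBefore t) (subtree t) := disjoint_left.mpr fun _ hz hzt =>
  not_pathKeys_lt_of_le hX (mem_subtree.mp hzt) (mem_dfsBefore.mp hz)

lemma position_lt_position (hX : IsTreeOrder X) (h : pathKeys y < pathKeys x) :
    position Q y < position Q x := by
  have hcard : #(dfsBefore y) < #(dfsBefore x) := by
    refine card_lt_card ((ssubset_iff_of_subset fun z hz => ?_).mpr ⟨y, ?_, ?_⟩)
    · exact mem_dfsBefore.mpr ((mem_dfsBefore.mp hz).trans h)
    · exact mem_dfsBefore.mpr h
    · simp
  have hsub : finishedBefore y ⊆ finishedBefore x := fun d hd => by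
    rw [mem_finishedBefore] at hd ⊢
    refine ⟨hd.1, hd.2.1.trans h, fun hxd => ?_⟩
    exact lt_asymm hd.2.1 ((pathKeys_lt_iff_of_le hX hxd hd.2.2).mpr h)
  have := sum_le_sum_of_subset (f := gap Q) hsub
  unfold position
  omega

lemma position_injective (hX : IsTreeOrder X) : Function.Injective (position (X := X) Q) :=
    fun x y h => by
  rcases lt_trichotomy (pathKeys x) (pathKeys y) with hlt | heq | hgt
  · exact absurd h (position_lt_position Q hX hlt).ne
  · exact pathKeys_injective heq
  · exact absurd h (position_lt_position Q hX hgt).ne'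

lemma position_le_of_le (hX : IsTreeOrder X) (h : u ≤ v) : position Q v ≤ position Q u := by
  rcases h.lt_or_eq with hlt | rfl
  · exact (position_lt_position Q hX (pathKeys_lt_of_lt hX hlt)).le
  · exact le_rfl

lemma disjoint_finishedBefore_insert_topsBelow (hX : IsTreeOrder X) (t : X) :
    Disjoint (finishedBefore t) (insert t (topsBelow t)) := disjoint_left.mpr fun d hd hdt => by
  rw [mem_finishedBefore] at hd
  rw [mem_insert, mem_topsBelow] at hdt
  rcases hdt with rfl | hdt
  · exact lt_irrefl _ hd.2.1
  · exact lt_asymm hd.2.1 (pathKeys_lt_of_lt hX hdt.1)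

lemma insert_dfsBefore_subset (hX : IsTreeOrder X) {t : X} (h : u ≤ t) :
    insert u (dfsBefore u) ⊆ dfsBefore t ∪ subtree t := by
  intro z hz
  rw [mem_insert, mem_dfsBefore] at hz
  rw [mem_union, mem_dfsBefore, mem_subtree]
  rcases hz with rfl | hz
  · exact .inr h
  · by_cases hzt : z ≤ t
    · exact .inr hzt
    · exact .inl ((pathKeys_lt_iff_of_le hX h hzt).mpr hz)

lemma finishedBefore_subset (hX : IsTreeOrder X) {t : X} (h : u ≤ t) :
    finishedBefore u ⊆ finishedBefore t ∪ topsBelow t := by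
  intro d hd
  rw [mem_finishedBefore] at hd
  rw [mem_union, mem_finishedBefore, mem_topsBelow]
  by_cases hdt : d ≤ t
  · exact .inr ⟨lt_of_le_of_ne hdt (by rintro rfl; exact hd.2.2 h), hd.1⟩
  · exact .inl ⟨hd.1, (pathKeys_lt_iff_of_le hX h hdt).mpr hd.2.1, fun htd => hd.2.2 (h.trans htd)⟩

lemma dfsBefore_union_subtree_subset (hX : IsTreeOrder X) {t : X}
    (hlt : pathKeys t < pathKeys u) (hu : ¬ u ≤ t) : dfsBefore t ∪ subtree t ⊆ dfsBefore u := by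
  intro z hz
  rw [mem_union, mem_dfsBefore, mem_subtree] at hz
  rw [mem_dfsBefore]
  rcases hz with hz | hz
  · exact hz.trans hlt
  · exact (lt_pathKeys_iff_of_le hX hz hu).mp hlt

lemma finishedBefore_union_subset (hX : IsTreeOrder X) {t : X} (ht : ¬ IsHeavy t)
    (hlt : pathKeys t < pathKeys u) (hu : ¬ u ≤ t) :
    finishedBefore t ∪ insert t (topsBelow t) ⊆ finishedBefore u := by
  intro d hd
  simp only [mem_union, mem_insert, mem_finishedBefore, mem_topsBelow] at hd ⊢
  rcases hd with hd | rfl | hd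
  · exact ⟨hd.1, hd.2.1.trans hlt,
      fun hud => lt_asymm hd.2.1 ((pathKeys_lt_iff_of_le hX hud hd.2.2).mpr hlt)⟩
  · exact ⟨ht, hlt, hu⟩
  · exact ⟨hd.2, (lt_pathKeys_iff_of_le hX hd.1.le hu).mp hlt, fun hud => hu (hud.trans hd.1.le)⟩

lemma position_lt_add_regionLength (hX : IsTreeOrder X) {t : X} (h : u ≤ t) :
    position Q u < position Q t + regionLength Q t := by
  have hcard := card_le_card (insert_dfsBefore_subset hX h)
  rw [card_insert_of_notMem (by simp), card_union_of_disjoint (disjoint_dfsBefore_subtree hX t)]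
    at hcard
  have hsum := sum_le_sum_of_subset (f := gap Q) (finishedBefore_subset hX h)
  rw [sum_union ((disjoint_finishedBefore_insert_topsBelow hX t).mono_right (subset_insert _ _))]
    at hsum
  rw [regionLength_eq, size]
  unfold position
  omega

lemma position_add_le (hX : IsTreeOrder X) {t : X} (ht : ¬ IsHeavy t)
    (hlt : pathKeys t < pathKeys u) (hu : ¬ u ≤ t) :
    position Q t + regionLength Q t + gap Q t ≤ position Q u := by
  have hcard := card_le_card (dfsBefore_union_subtree_subset hX hlt hu)
  rw [card_union_of_disjoint (disjoint_dfsBefore_subtree hX t)] at hcard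
  have hsum := sum_le_sum_of_subset (f := gap Q) (finishedBefore_union_subset hX ht hlt hu)
  rw [sum_union (disjoint_finishedBefore_insert_topsBelow hX t),
    sum_insert (by simp)] at hsum
  rw [regionLength_eq, size]
  unfold position
  omega

def intervalLength (v : X) : ℕ :=
  position Q (heavyTop v) + regionLength Q (heavyTop v) - position Q v

lemma intervalLength_le_regionLength (hX : IsTreeOrder X) (v : X) :
    intervalLength Q v ≤ regionLength Q (heavyTop v) := by
  have := position_le_of_le Q hX (le_heavyTop v)
  unfold intervalLength
  omega

-- The descendants of `v` fill the positions from `v` to the end of the region of `heavyTop v`,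
-- and rounding the length of this interval up only reaches into the gap after that region.
theorem le_iff_position (hX : IsTreeOrder X) (u v : X) :
    u ≤ v ↔ position Q v ≤ position Q u ∧
      position Q u < position Q v + roundUp Q (intervalLength Q v) := by
  have hvt := le_heavyTop v
  have hend := position_lt_add_regionLength Q hX hvt
  constructor
  · intro h
    have := position_lt_add_regionLength Q hX (h.trans hvt)
    have : intervalLength Q v ≤ roundUp Q (intervalLength Q v) := le_roundUp
    refine ⟨position_le_of_le Q hX h, ?_⟩
    unfold intervalLength at *
    omega
  · rintro ⟨h₁, h₂⟩
    by_contra huv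
    have hlt : pathKeys v < pathKeys u := by
      rcases lt_trichotomy (pathKeys u) (pathKeys v) with h | h | h
      · exact absurd h₁ (position_lt_position Q hX h).not_ge
      · exact absurd (pathKeys_injective h).le huv
      · exact h
    have hut : ¬ u ≤ heavyTop v := fun hut => lt_asymm hlt
      (pathKeys_lt_of_le_heavyTop hX hut huv fun hvu => not_pathKeys_lt_of_le hX hvu hlt)
    have htu : pathKeys (heavyTop v) < pathKeys u := by
      rcases hvt.lt_or_eq with h | h
      · exact (pathKeys_lt_of_lt hX h).trans hlt
      · exact h ▸ hlt
    have hafter := position_add_le Q hX (not_isHeavy_heavyTop v) htu hut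
    have hround : roundUp Q (intervalLength Q v) ≤ intervalLength Q v + gap Q (heavyTop v) :=
      roundUp_le.trans (Nat.add_le_add_left
        (Nat.div_le_div_right (intervalLength_le_regionLength Q hX v)) _)
    unfold intervalLength at *
    omega

lemma sum_gap_mul_le (s : Finset X) :
    (∑ d ∈ s, gap Q d) * Q ≤ ∑ d ∈ s, regionLength Q d := by
  rw [sum_mul]
  exact sum_le_sum fun d _ => Nat.div_mul_le_self _ _

lemma regionLength_le (hX : IsTreeOrder X) (hQ : 2 * Nat.log 2 (Fintype.card X) < Q) (c : X) :
    regionLength Q c ≤ 2 * size c := by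
  induction c using WellFoundedLT.induction with
  | _ c ih =>
  have hlog : Nat.log 2 (size c) ≤ Nat.log 2 (Fintype.card X) :=
    Nat.log_mono_right (size_le_card c)
  have hgaps : (∑ d ∈ topsBelow c, gap Q d) * Q ≤ size c * Q := calc
    (∑ d ∈ topsBelow c, gap Q d) * Q ≤ ∑ d ∈ topsBelow c, regionLength Q d := sum_gap_mul_le Q _
    _ ≤ ∑ d ∈ topsBelow c, 2 * size d := sum_le_sum fun d hd =>
        ih d (by rw [mem_topsBelow] at hd; exact hd.1)
    _ ≤ 2 * (size c * Nat.log 2 (size c)) := by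
        rw [← mul_sum]
        exact Nat.mul_le_mul_left 2 (sum_size_topsBelow_le hX c)
    _ ≤ size c * Q := by nlinarith
  rw [regionLength_eq]
  have := Nat.le_of_mul_le_mul_right hgaps (by omega)
  omega

lemma sum_gap_le (hX : IsTreeOrder X) (hQ : 2 * (Nat.log 2 (Fintype.card X) + 1) ≤ Q) :
    ∑ d ∈ ({d | ¬ IsHeavy d} : Finset X), gap Q d ≤ Fintype.card X := by
  refine Nat.le_of_mul_le_mul_right ?_ (by omega : 0 < Q)
  calc (∑ d ∈ ({d | ¬ IsHeavy d} : Finset X), gap Q d) * Q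
      ≤ ∑ d ∈ ({d | ¬ IsHeavy d} : Finset X), regionLength Q d := sum_gap_mul_le Q _
    _ ≤ ∑ d ∈ ({d | ¬ IsHeavy d} : Finset X), 2 * size d :=
        sum_le_sum fun d _ => regionLength_le Q hX (by omega) d
    _ ≤ 2 * (Fintype.card X * (Nat.log 2 (Fintype.card X) + 1)) := by
        rw [← mul_sum]
        exact Nat.mul_le_mul_left 2 (sum_size_tops_le hX)
    _ ≤ Fintype.card X * Q := by nlinarith

lemma position_le (hX : IsTreeOrder X) (hQ : 2 * (Nat.log 2 (Fintype.card X) + 1) ≤ Q) (x : X) :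
    position Q x ≤ 2 * Fintype.card X := by
  have := card_le_univ (dfsBefore x)
  have := sum_le_sum_of_subset (f := gap Q)
    (fun d hd => by simpa using (mem_finishedBefore.mp hd).1 :
      finishedBefore x ⊆ ({d | ¬ IsHeavy d} : Finset X))
  have := sum_gap_le Q hX hQ
  unfold position
  omega

lemma intervalLength_le (hX : IsTreeOrder X) (hQ : 2 * (Nat.log 2 (Fintype.card X) + 1) ≤ Q)
    (v : X) : intervalLength Q v ≤ 2 * Fintype.card X :=
  (intervalLength_le_regionLength Q hX v).trans
    ((regionLength_le Q hX (by omega) _).trans (by linarith [size_le_card (heavyTop v)]))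

end Layout

section Label

def label (m : ℕ) (x : X) : ℕ :=
  encodeLabel m (position (slack m) x) (roundExp (slack m) (intervalLength (slack m) x))
    (roundMant (slack m) (intervalLength (slack m) x))

variable {m : ℕ}

lemma label_fields_lt (hX : IsTreeOrder X) (hm : Fintype.card X < 2 ^ (m + 1)) (x : X) :
    position (slack m) x < 2 ^ (m + 2) ∧
      roundExp (slack m) (intervalLength (slack m) x) < m + 2 ∧
      roundMant (slack m) (intervalLength (slack m) x) < mantBound m := by
  have hcard : Fintype.card X ≠ 0 := (Fintype.card_pos_iff.mpr ⟨x⟩).ne'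
  have hlog : Nat.log 2 (Fintype.card X) ≤ m :=
    Nat.lt_succ_iff.mp (Nat.log_lt_of_lt_pow hcard hm)
  have hQ : 2 * (Nat.log 2 (Fintype.card X) + 1) ≤ slack m := by unfold slack; omega
  have hpow : 2 ^ (m + 2) = 2 * 2 ^ (m + 1) := by ring
  refine ⟨(position_le _ hX hQ x).trans_lt (by omega), ?_, ?_⟩
  · have := Nat.log_mono_right (b := 2) ((intervalLength_le _ hX hQ x).trans_eq (mul_comm _ _))
    rw [Nat.log_mul_base one_lt_two hcard] at this
    exact roundExp_le.trans_lt (by omega)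
  · exact (roundMant_le (by unfold slack; omega)).trans_lt (Nat.lt_succ_self _)

lemma label_injective (hX : IsTreeOrder X) (hm : Fintype.card X < 2 ^ (m + 1)) :
    Function.Injective (label (X := X) m) := fun x y h => by
  obtain ⟨hx₁, hx₂, hx₃⟩ := label_fields_lt hX hm x
  obtain ⟨hy₁, hy₂, hy₃⟩ := label_fields_lt hX hm y
  have := congrArg labelPos h
  rw [label, label, labelPos_encodeLabel hx₁ hx₂ hx₃, labelPos_encodeLabel hy₁ hy₂ hy₃] at this
  exact position_injective _ hX this

lemma label_lt (hX : IsTreeOrder X) (hm : Fintype.card X < 2 ^ (m + 1)) (x : X) :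
    label m x < 2 * classStart m :=
  let ⟨h₁, h₂, h₃⟩ := label_fields_lt hX hm x
  encodeLabel_lt h₁ h₂ h₃

lemma decoder_label_eq_true_iff (hX : IsTreeOrder X) (hm : Fintype.card X < 2 ^ (m + 1))
    (u v : X) : decoder (label m v) (label m u) = true ↔ u ≤ v := by
  obtain ⟨hu₁, hu₂, hu₃⟩ := label_fields_lt hX hm u
  obtain ⟨hv₁, hv₂, hv₃⟩ := label_fields_lt hX hm v
  rw [le_iff_position (slack m) hX, decoder, label, label, labelPos_encodeLabel hu₁ hu₂ hu₃,
    labelPos_encodeLabel hv₁ hv₂ hv₃, labelSpan_encodeLabel hv₁ hv₂ hv₃, decide_eq_true_iff]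
  rfl

end Label

end

end AncestryLabeling

open AncestryLabeling

/-- There is a single decoder `D` and a constant `C` such that every finite
tree order (rooted forest) on `n ≥ 4` elements admits an injective labeling
by natural numbers bounded by `C · n · (log₂ n)³ · (log₂ log₂ n)^C`
(i.e. labels of `log₂ n + 3 log₂ log₂ n + O(log₂ log₂ log₂ n)` bits),
from which `D` decodes ancestry. -/
theorem ancestry_scheme_optimal :
    ∃ (C : ℕ) (D : ℕ → ℕ → Bool),
      ∀ (X : Type) [Fintype X] [PartialOrder X],
        IsTreeOrder X →
        4 ≤ Fintype.card X →
        ∃ L : X → ℕ,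
          Function.Injective L ∧
          (∀ x : X, L x ≤ C * Fintype.card X * (Nat.log 2 (Fintype.card X)) ^ 3 *
            (Nat.log 2 (Nat.log 2 (Fintype.card X))) ^ C) ∧
          (∀ u v : X, u ≤ v ↔ D (L v) (L u) = true) := by
  refine ⟨112, decoder, fun X _ _ hX hn => ?_⟩
  set m := Nat.log 2 (Fintype.card X)
  have hcard : Fintype.card X < 2 ^ (m + 1) := Nat.lt_pow_succ_log_self one_lt_two _
  have hm : 2 ≤ m := by
    have := Nat.log_mono_right (b := 2) (n := 2 ^ 2) hn
    rwa [Nat.log_pow one_lt_two] at this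
  refine ⟨label m, label_injective hX hcard, fun x => ?_,
    fun u v => (decoder_label_eq_true_iff hX hcard u v).symm⟩
  have hloglog : 1 ≤ Nat.log 2 m ^ 112 := Nat.one_le_pow _ _ (Nat.log_pos one_lt_two hm)
  calc label m x ≤ 2 * classStart m := (label_lt hX hcard x).le
    _ ≤ 112 * 2 ^ m * m ^ 3 := two_mul_classStart_le hm
    _ ≤ 112 * Fintype.card X * m ^ 3 * 1 := by
        rw [mul_one]
        gcongr
        exact Nat.pow_log_le_self 2 (by omega)
    _ ≤ _ := by gcongr
end

section
/- There exists a constant C such that for all integers n ≥ 2 and d ≥ 2 there exist a natural number N ≤ C · n · d² and a relation D : Fin N → Fin N → Prop such that for every finite tree order (X, ≤) with at most n elements and height at most d, there is an injective labeling L : X → Fin N satisfying: for all u, v ∈ X, u ≤ v if and only if D(L(v), L(u)) holds. (Equivalently: an ancestry-labeling scheme for forests with at most n nodes and depth at most d using labels of log₂ n + 2 log₂ d + O(1) bits.) -/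
/-- The height of a partial order is at most `d`: every chain has at most
`d` elements. -/
def HeightLE (X : Type*) [PartialOrder X] (d : ℕ) : Prop :=
  ∀ c : Finset X, (∀ u ∈ c, ∀ v ∈ c, u ≤ v ∨ v ≤ u) → c.card ≤ d

/-!
Each node `x` receives a start point `a x` and a mantissa `m x ∈ [8d, 16d]`, standing for the
interval `[a x, a x + m x * 2 ^ v₂(a x))`; `x` is an ancestor of `y` iff `a y` lies in the
interval of `x`, so the pair `(a x, m x - 8d)` is a label from which ancestry can be decoded.
Intervals are allocated recursively: the descendants of a root are packed into a window of
width `F`, and the root gets an interval of length `m * 2 ^ e ≥ F + 1` starting at a point of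
2-adic valuation exactly `e`. Rounding `F + 1` up to such a length and aligning the start point
costs a factor `1 + 3/(8d)` per level, which a budget of `8 (d + h)` per node in forests of
height `h` absorbs. For height `d` all start points lie below `16 d n`.
-/

open Finset

lemma padicValNat_two_odd_mul_two_pow (q e : ℕ) : padicValNat 2 ((2 * q + 1) * 2 ^ e) = e := by
  have : ¬ 2 ∣ 2 * q + 1 := by omega
  rw [padicValNat.mul (by omega) (by positivity), padicValNat.prime_pow,
    padicValNat.eq_zero_of_not_dvd this, zero_add]

lemma exists_le_padicValNat_two_eq (t e : ℕ) :
    ∃ a, t ≤ a ∧ a ≤ t + 2 * 2 ^ e ∧ padicValNat 2 a = e := by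
  refine ⟨(2 * ((t + 2 ^ e) / (2 * 2 ^ e)) + 1) * 2 ^ e, ?_, ?_,
    padicValNat_two_odd_mul_two_pow _ e⟩ <;>
  · have hdiv := Nat.div_add_mod (t + 2 ^ e) (2 * 2 ^ e)
    have hmod := Nat.mod_lt (t + 2 ^ e) (by positivity : 0 < 2 * 2 ^ e)
    generalize (t + 2 ^ e) / (2 * 2 ^ e) = q at *
    generalize (t + 2 ^ e) % (2 * 2 ^ e) = r at *
    linarith

lemma exists_mantissa_mul_two_pow (K x : ℕ) (hK : 0 < K) :
    ∃ m e, K ≤ m ∧ m ≤ 2 * K ∧ x ≤ m * 2 ^ e ∧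
      K * ((m + 2) * 2 ^ e) ≤ max (K * (K + 2)) ((K + 3) * x) := by
  rcases le_or_gt x K with hxK | hKx
  · exact ⟨K, 0, le_rfl, by omega, by simpa using hxK, by simp⟩
  set e := Nat.log 2 (x / K)
  have hpos : 0 < 2 ^ e := by positivity
  have hlow : K * 2 ^ e ≤ x := by
    rw [mul_comm, ← Nat.le_div_iff_mul_le hK]
    exact Nat.pow_log_le_self 2 (Nat.div_pos hKx.le hK).ne'
  have hup : x < 2 * K * 2 ^ e := by
    have := Nat.lt_pow_succ_log_self (b := 2) (by norm_num) (x / K)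
    rw [Nat.div_lt_iff_lt_mul hK, pow_succ] at this
    linarith
  refine ⟨x / 2 ^ e + 1, e, ?_, ?_, ?_, le_max_of_le_right ?_⟩
  · have := (Nat.le_div_iff_mul_le hpos).2 hlow
    omega
  · have := (Nat.div_lt_iff_lt_mul hpos).2 hup
    omega
  · have := Nat.lt_div_mul_add (a := x) hpos
    rw [add_mul, one_mul]
    omega
  · have := Nat.div_mul_le_self x (2 ^ e)
    nlinarith

lemma exists_root_mantissa {d h g : ℕ} (hh : h < d) :
    ∃ m e, m ∈ Set.Icc (8 * d) (16 * d) ∧ 8 * (d + h) * g + 1 ≤ m * 2 ^ e ∧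
      (m + 2) * 2 ^ e ≤ 8 * (d + (h + 1)) * (g + 1) := by
  obtain ⟨m, e, hm₁, hm₂, hx, hcost⟩ :=
    exists_mantissa_mul_two_pow (8 * d) (8 * (d + h) * g + 1) (by omega)
  refine ⟨m, e, ⟨hm₁, by omega⟩, hx,
    Nat.le_of_mul_le_mul_left (hcost.trans (max_le ?_ ?_)) (by omega : 0 < 8 * d)⟩
  · exact Nat.mul_le_mul_left _ (by nlinarith)
  · nlinarith

/-- The pair `(a, m)` codes the interval `[a, intervalEnd a m)`: its scale `2 ^ e` is read off
the start point as `e = v₂(a)`, so only the bounded mantissa `m` has to be stored. -/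
def intervalEnd (a m : ℕ) : ℕ := a + m * 2 ^ padicValNat 2 a

section NestedLabeling

variable {X : Type*} [PartialOrder X]

structure IsNestedLabeling (M : Set ℕ) (s : Finset X) (a m : X → ℕ) (lo hi : ℕ) : Prop where
  mem : ∀ x ∈ s, m x ∈ M
  lo_le : ∀ x ∈ s, lo ≤ a x
  intervalEnd_le : ∀ x ∈ s, intervalEnd (a x) (m x) ≤ hi
  le_iff : ∀ x ∈ s, ∀ y ∈ s, y ≤ x ↔ a x ≤ a y ∧ a y < intervalEnd (a x) (m x)

/-- Labelings must exist at every offset `t`, since shifting a labeling changes the 2-adic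
valuations of its start points. -/
def NestedLabelable (M : Set ℕ) (s : Finset X) (F : ℕ) : Prop :=
  ∀ t, ∃ a m : X → ℕ, IsNestedLabeling M s a m t (t + F)

namespace IsNestedLabeling

variable {M : Set ℕ} {s s₁ s₂ : Finset X} {a m a' m' : X → ℕ} {lo mid hi : ℕ}

lemma lt_intervalEnd (h : IsNestedLabeling M s a m lo hi) {x : X} (hx : x ∈ s) :
    a x < intervalEnd (a x) (m x) :=
  ((h.le_iff x hx x hx).1 le_rfl).2

lemma injOn (h : IsNestedLabeling M s a m lo hi) : Set.InjOn a s := by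
  intro x hx y hy hxy
  have hyx := (h.le_iff x hx y hy).2 ⟨hxy.le, hxy ▸ h.lt_intervalEnd hx⟩
  have hxy' := (h.le_iff y hy x hx).2 ⟨hxy.ge, hxy ▸ h.lt_intervalEnd hy⟩
  exact le_antisymm hxy' hyx

lemma mono (h : IsNestedLabeling M s a m lo hi) {lo' hi' : ℕ} (hlo : lo' ≤ lo) (hhi : hi ≤ hi') :
    IsNestedLabeling M s a m lo' hi' where
  mem := h.mem
  lo_le x hx := hlo.trans (h.lo_le x hx)
  intervalEnd_le x hx := (h.intervalEnd_le x hx).trans hhi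
  le_iff := h.le_iff

lemma congr (h : IsNestedLabeling M s a m lo hi) (ha : Set.EqOn a a' s) (hm : Set.EqOn m m' s) :
    IsNestedLabeling M s a' m' lo hi where
  mem x hx := hm hx ▸ h.mem x hx
  lo_le x hx := ha hx ▸ h.lo_le x hx
  intervalEnd_le x hx := ha hx ▸ hm hx ▸ h.intervalEnd_le x hx
  le_iff x hx y hy := ha hx ▸ ha hy ▸ hm hx ▸ h.le_iff x hx y hy

lemma union [DecidableEq X] (h₁ : IsNestedLabeling M s₁ a m lo mid)
    (h₂ : IsNestedLabeling M s₂ a m mid hi) (hlo : lo ≤ mid) (hhi : mid ≤ hi)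
    (hinc : ∀ x ∈ s₁, ∀ y ∈ s₂, ¬ x ≤ y ∧ ¬ y ≤ x) :
    IsNestedLabeling M (s₁ ∪ s₂) a m lo hi := by
  have h₁' := h₁.mono le_rfl hhi
  have h₂' := h₂.mono hlo le_rfl
  refine ⟨fun x hx => ?_, fun x hx => ?_, fun x hx => ?_, fun x hx y hy => ?_⟩
  · rcases mem_union.1 hx with hx | hx
    exacts [h₁.mem x hx, h₂.mem x hx]
  · rcases mem_union.1 hx with hx | hx
    exacts [h₁'.lo_le x hx, h₂'.lo_le x hx]
  · rcases mem_union.1 hx with hx | hx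
    exacts [h₁'.intervalEnd_le x hx, h₂'.intervalEnd_le x hx]
  rcases mem_union.1 hx with hx | hx <;> rcases mem_union.1 hy with hy | hy
  · exact h₁.le_iff x hx y hy
  · have := h₁.intervalEnd_le x hx
    have := h₂.lo_le y hy
    exact iff_of_false (hinc x hx y hy).2 (by omega)
  · have := h₁.intervalEnd_le y hy
    have := h₁.lt_intervalEnd hy
    have := h₂.lo_le x hx
    exact iff_of_false (hinc y hy x hx).1 (by omega)
  · exact h₂.le_iff x hx y hy

lemma insert_top [DecidableEq X] {r : X} (hs : ∀ y ∈ s, y < r)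
    (h : IsNestedLabeling M s a m (a r + 1) (intervalEnd (a r) (m r))) (hr : m r ∈ M)
    (hpos : 0 < m r) : IsNestedLabeling M (insert r s) a m (a r) (intervalEnd (a r) (m r)) := by
  have hr_lt : a r < intervalEnd (a r) (m r) :=
    Nat.lt_add_of_pos_right (Nat.mul_pos hpos (by positivity))
  refine ⟨?_, ?_, ?_, ?_⟩
  · exact forall_mem_insert .. |>.2 ⟨hr, h.mem⟩
  · exact forall_mem_insert .. |>.2 ⟨le_rfl, fun x hx => (h.lo_le x hx).trans' (by omega)⟩
  · exact forall_mem_insert .. |>.2 ⟨le_rfl, h.intervalEnd_le⟩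
  refine forall_mem_insert .. |>.2 ⟨forall_mem_insert .. |>.2 ⟨?_, fun y hy => ?_⟩, fun x hx => ?_⟩
  · exact iff_of_true le_rfl ⟨le_rfl, hr_lt⟩
  · have := h.lo_le y hy
    have := h.lt_intervalEnd hy
    have := h.intervalEnd_le y hy
    exact iff_of_true (hs y hy).le ⟨by omega, by omega⟩
  refine forall_mem_insert .. |>.2 ⟨?_, h.le_iff x hx⟩
  have := h.lo_le x hx
  exact iff_of_false (hs x hx).not_ge (by omega)

end IsNestedLabeling

namespace NestedLabelable

variable {M : Set ℕ} {s s₁ s₂ : Finset X} {F F₁ F₂ : ℕ}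

lemma empty (F : ℕ) : NestedLabelable M (∅ : Finset X) F :=
  fun _ => ⟨0, 0, ⟨by simp, by simp, by simp, by simp⟩⟩

lemma mono (h : NestedLabelable M s F₁) (hF : F₁ ≤ F₂) : NestedLabelable M s F₂ := fun t =>
  let ⟨a, m, hl⟩ := h t
  ⟨a, m, hl.mono le_rfl (by omega)⟩

lemma union [DecidableEq X] (h₁ : NestedLabelable M s₁ F₁) (h₂ : NestedLabelable M s₂ F₂)
    (hinc : ∀ x ∈ s₁, ∀ y ∈ s₂, ¬ x ≤ y ∧ ¬ y ≤ x) :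
    NestedLabelable M (s₁ ∪ s₂) (F₁ + F₂) := by
  intro t
  obtain ⟨a₁, m₁, hl₁⟩ := h₁ t
  obtain ⟨a₂, m₂, hl₂⟩ := h₂ (t + F₁)
  have hs₂ : ∀ x ∈ s₂, x ∉ s₁ := fun x hx hx₁ => (hinc x hx₁ x hx).1 le_rfl
  refine ⟨s₁.piecewise a₁ a₂, s₁.piecewise m₁ m₂,
    IsNestedLabeling.union (mid := t + F₁) ?_ ?_ (by omega) (by omega) hinc⟩
  · exact hl₁.congr (fun x hx => (piecewise_eq_of_mem _ _ _ hx).symm)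
      (fun x hx => (piecewise_eq_of_mem _ _ _ hx).symm)
  · exact (hl₂.mono le_rfl (by omega)).congr
      (fun x hx => (piecewise_eq_of_notMem _ _ _ (hs₂ x hx)).symm)
      (fun x hx => (piecewise_eq_of_notMem _ _ _ (hs₂ x hx)).symm)

lemma insert_top [DecidableEq X] {r : X} (hs : ∀ y ∈ s, y < r) {m₀ e : ℕ} (hm₀ : m₀ ∈ M)
    (hpos : 0 < m₀) (hF : F + 1 ≤ m₀ * 2 ^ e) (h : NestedLabelable M s F) :
    NestedLabelable M (insert r s) ((m₀ + 2) * 2 ^ e) := by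
  intro t
  obtain ⟨ar, htar, hart, hval⟩ := exists_le_padicValNat_two_eq t e
  obtain ⟨a, m, hl⟩ := h (ar + 1)
  have hr : r ∉ s := fun hr => (hs r hr).false
  have hend : intervalEnd ar m₀ = ar + m₀ * 2 ^ e := by rw [intervalEnd, hval]
  have hl' : IsNestedLabeling M s (Function.update a r ar) (Function.update m r m₀)
      (ar + 1) (intervalEnd ar m₀) := by
    refine (hl.mono le_rfl (by omega)).congr ?_ ?_ <;>
    · intro x hx
      rw [Function.update_of_ne (ne_of_mem_of_not_mem hx hr)]
  have key := IsNestedLabeling.insert_top (a := Function.update a r ar)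
    (m := Function.update m r m₀) hs (by simpa only [Function.update_self] using hl')
    (by simpa using hm₀) (by simpa using hpos)
  rw [Function.update_self, Function.update_self] at key
  exact ⟨_, _, key.mono htar (by rw [hend]; nlinarith)⟩

end NestedLabelable

lemma card_filter_le_lt_card_filter_le {G s : Finset X} {r x : X} [DecidablePred (x ≤ ·)]
    (hGs : G ⊆ s) (hr : r ∈ s) (hrG : r ∉ G) (hx : x ≤ r) :
    #{y ∈ G | x ≤ y} < #{y ∈ s | x ≤ y} :=
  card_lt_card <| ssubset_iff_of_subset (filter_subset_filter _ hGs) |>.2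
    ⟨r, mem_filter.2 ⟨hr, hx⟩, fun h => hrG (mem_filter.1 h).1⟩

lemma IsTreeOrder.incomparable_of_le_maximal (htree : IsTreeOrder X) {s : Finset X} {r x y : X}
    (hr : Maximal (· ∈ s) r) (hx : x ≤ r) (hy : y ∈ s) (hyr : ¬ y ≤ r) : ¬ x ≤ y ∧ ¬ y ≤ x :=
  ⟨fun hxy => (htree x y r hxy hx).elim hyr fun hry => hyr (hr.2 hy hry),
    fun hyx => hyr (hyx.trans hx)⟩

lemma IsTreeOrder.card_filter_le_of_heightLE [Fintype X] [DecidableLE X] (htree : IsTreeOrder X)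
    {d : ℕ} (hd : HeightLE X d) (x : X) : #{y ∈ univ | x ≤ y} ≤ d :=
  hd _ fun u hu v hv => htree x u v (mem_filter.1 hu).2 (mem_filter.1 hv).2

theorem nestedLabelable_of_card_filter_le [DecidableLE X] (htree : IsTreeOrder X) {d h : ℕ}
    (hhd : h ≤ d) (s : Finset X) (hs : ∀ x ∈ s, #{y ∈ s | x ≤ y} ≤ h) :
    NestedLabelable (Set.Icc (8 * d) (16 * d)) s (8 * (d + h) * #s) := by
  classical
  induction s using Finset.strongInduction generalizing h with | H s ih =>
  rcases s.eq_empty_or_nonempty with rfl | hne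
  · exact .empty _
  obtain ⟨r, hr⟩ := s.exists_maximal hne
  have hrT : r ∈ {y ∈ s | y ≤ r} := mem_filter.2 ⟨hr.1, le_rfl⟩
  obtain ⟨h, rfl⟩ : ∃ h', h = h' + 1 :=
    Nat.exists_eq_add_one.2 <|
      (card_pos.2 ⟨r, mem_filter.2 ⟨hr.1, le_rfl⟩⟩).trans_le (hs r hr.1)
  set G := {y ∈ s | y ≤ r}.erase r
  have hG : ∀ y ∈ G, y < r := fun y hy =>
    lt_of_le_of_ne (mem_filter.1 (mem_of_mem_erase hy)).2 (ne_of_mem_erase hy)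
  have hGs : G ⊂ s := ssubset_of_subset_of_ne ((erase_subset _ _).trans (filter_subset _ s))
    fun heq => notMem_erase r _ (heq ▸ hr.1)
  have hGh : ∀ x ∈ G, #{y ∈ G | x ≤ y} ≤ h := fun x hx =>
    Nat.le_of_lt_succ <| (card_filter_le_lt_card_filter_le hGs.subset hr.1 (notMem_erase r _)
      (hG x hx).le).trans_le (hs x (hGs.subset hx))
  obtain ⟨m₀, e, hm₀, hfit, hcost⟩ := exists_root_mantissa (g := #G) (Nat.lt_of_succ_le hhd)
  have hT : NestedLabelable (Set.Icc (8 * d) (16 * d)) {y ∈ s | y ≤ r}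
      (8 * (d + (h + 1)) * #{y ∈ s | y ≤ r}) := by
    rw [← insert_erase hrT, card_insert_of_notMem (notMem_erase r _)]
    exact ((ih G hGs (by omega) hGh).insert_top hG hm₀ (by have := hm₀.1; omega) hfit).mono hcost
  have hS := ih {y ∈ s | ¬ y ≤ r}
    (ssubset_of_subset_of_ne (filter_subset _ s) fun heq =>
      (mem_filter.1 (heq.symm ▸ hr.1 : r ∈ {y ∈ s | ¬ y ≤ r})).2 le_rfl) hhd fun x hx =>
    (card_le_card (filter_subset_filter _ (filter_subset _ s))).trans (hs x (filter_subset _ s hx))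
  have := hT.union hS fun x hx y hy =>
    htree.incomparable_of_le_maximal hr (mem_filter.1 hx).2 (mem_filter.1 hy).1 (mem_filter.1 hy).2
  rwa [filter_union_filter_not_eq, ← mul_add, card_filter_add_card_filter_not] at this

end NestedLabeling

/-- A label in `Fin (A * (K + 1))` is a pair `(a, m - K)`. -/
def decodeAncestor (K : ℕ) {A : ℕ} (i j : Fin (A * (K + 1))) : Prop :=
  let p := finProdFinEquiv.symm i
  let q := finProdFinEquiv.symm j
  (p.1 : ℕ) ≤ q.1 ∧ (q.1 : ℕ) < intervalEnd p.1 (p.2 + K)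

/-- An ancestry-labeling scheme for forests with at most `n` nodes and depth
at most `d`, with labels drawn from a set of size `O(n·d²)`,
i.e. labels of `log₂ n + 2 log₂ d + O(1)` bits. -/
theorem ancestry_scheme_bounded_depth :
    ∃ C : ℕ, ∀ n d : ℕ, 2 ≤ n → 2 ≤ d →
      ∃ (N : ℕ) (D : Fin N → Fin N → Prop),
        N ≤ C * n * d ^ 2 ∧
        ∀ (X : Type) [Fintype X] [PartialOrder X],
          IsTreeOrder X → Fintype.card X ≤ n → HeightLE X d →
          ∃ L : X → Fin N,
            Function.Injective L ∧
            (∀ u v : X, u ≤ v ↔ D (L v) (L u)) := by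
  refine ⟨144, fun n d _ hd => ⟨16 * d * n * (8 * d + 1), decodeAncestor (8 * d), ?_, ?_⟩⟩
  · calc 16 * d * n * (8 * d + 1) ≤ 16 * d * n * (9 * d) := by gcongr; omega
      _ = 144 * n * d ^ 2 := by ring
  intro X _ _ htree hcard hheight
  classical
  have hwidth : 8 * (d + d) * #(univ : Finset X) ≤ 16 * d * n := by
    rw [card_univ]; nlinarith
  obtain ⟨a, m, hl⟩ := (nestedLabelable_of_card_filter_le htree le_rfl univ
    fun x _ => htree.card_filter_le_of_heightLE hheight x).mono hwidth 0
  have ha x : a x < 16 * d * n := by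
    have := hl.lt_intervalEnd (mem_univ x)
    have := hl.intervalEnd_le x (mem_univ x)
    omega
  have hm x : 8 * d ≤ m x ∧ m x ≤ 16 * d := hl.mem x (mem_univ x)
  refine ⟨fun x => finProdFinEquiv (⟨a x, ha x⟩, ⟨m x - 8 * d, by have := hm x; omega⟩),
    fun x y hxy => ?_, fun u v => ?_⟩
  · exact hl.injOn (mem_univ x) (mem_univ y)
      (congrArg (fun p => (p.1 : ℕ)) (finProdFinEquiv.injective hxy))
  · simp only [decodeAncestor, Equiv.symm_apply_apply, Nat.sub_add_cancel (hm v).1]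
    exact hl.le_iff v (mem_univ v) u (mem_univ u)
end

section
/- There exist a constant C and a single decoder relation D : ℕ → ℕ → Bool with the following property: for every finite tree order (X, ≤) with n ≥ 2 elements and height d ≥ 2, there is an injective labeling L : X → ℕ such that L(x) ≤ C · n · d² · (log₂ d)² for every x ∈ X, and for all u, v ∈ X one has u ≤ v if and only if D(L(v), L(u)) = true. (Equivalently: an ancestry-labeling scheme for the family of all forests in which any node of an n-node forest of depth at most d gets a label of log₂ n + 2 log₂ d + 2 log₂ log₂ d + O(1) bits.) -/
lemma IsTreeOrder.incomparable {X : Type*} [PartialOrder X] (hX : IsTreeOrder X) {x y r : X}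
    (hxr : x ≤ r) (hyr : ¬ y ≤ r) (hr : r ≤ y → y ≤ r) : ¬ x ≤ y ∧ ¬ y ≤ x :=
  ⟨fun hxy => (hX x y r hxy hxr).elim hyr (fun hry => hyr (hr hry)),
   fun hyx => hyr (hyx.trans hxr)⟩

open Finset

namespace AncestryScheme

lemma padicValNat_two_pow_mul_odd (c q : ℕ) : padicValNat 2 (2 ^ c * (2 * q + 1)) = c := by
  rw [padicValNat.mul (by positivity) (by omega), padicValNat.prime_pow,
    padicValNat.eq_zero_of_not_dvd (by omega), add_zero]

/-- `b` and `c` are the bit lengths of `m` and `b`: decoding reads `c` as the 2-adic valuation,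
then `b` from the next `c` bits, then `m` from the next `b` bits; the rest is `s`. -/
def encode (s m : ℕ) : ℕ :=
  let b := Nat.log 2 m + 1
  let c := Nat.log 2 b + 1
  2 ^ c * (2 * (2 ^ c * (2 ^ b * s + m) + b) + 1)

def decode (a : ℕ) : ℕ × ℕ :=
  let c := padicValNat 2 a
  let k := a / 2 ^ c / 2
  let b := k % 2 ^ c
  let i := k / 2 ^ c
  (i / 2 ^ b, i % 2 ^ b)

theorem decode_encode (s m : ℕ) : decode (encode s m) = (s, m) := by
  have hm : m < 2 ^ (Nat.log 2 m + 1) := Nat.lt_pow_succ_log_self one_lt_two m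
  have hb := Nat.lt_pow_succ_log_self one_lt_two (Nat.log 2 m + 1)
  have hk : ∀ k : ℕ, (2 * k + 1) / 2 = k := by omega
  simp only [decode, encode, padicValNat_two_pow_mul_odd,
    Nat.mul_div_cancel_left _ (Nat.two_pow_pos _), hk, Nat.mul_add_div (Nat.two_pow_pos _),
    Nat.mul_add_mod, Nat.div_eq_of_lt hm, Nat.div_eq_of_lt hb, Nat.mod_eq_of_lt hm,
    Nat.mod_eq_of_lt hb, add_zero]

lemma two_pow_log_succ_le {m : ℕ} (hm : m ≠ 0) : 2 ^ (Nat.log 2 m + 1) ≤ 2 * m := by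
  rw [pow_succ, mul_comm]
  exact Nat.mul_le_mul_left 2 (Nat.pow_log_le_self 2 hm)

theorem encode_le (s : ℕ) {m : ℕ} (hm : m ≠ 0) :
    encode s m ≤ 28 * (s + 1) * m * (Nat.log 2 m + 1) ^ 2 := by
  set b := Nat.log 2 m + 1
  have h2b : 2 ^ b ≤ 2 * m := two_pow_log_succ_le hm
  have h2c : 2 ^ (Nat.log 2 b + 1) ≤ 2 * b := two_pow_log_succ_le (by omega)
  have hb : 1 ≤ b := by omega
  have hms : 2 ^ b * s + m ≤ 2 * m * (s + 1) := by nlinarith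
  calc encode s m ≤ 2 * b * (2 * (2 * b * (2 * m * (s + 1)) + b) + 1) := by
        simp only [encode]; gcongr
    _ ≤ 28 * (s + 1) * m * b ^ 2 := by
        have : 1 ≤ m * (s + 1) := Nat.one_le_iff_ne_zero.mpr (by positivity)
        nlinarith

theorem encode_le_of_le_two_mul {d m : ℕ} (s : ℕ) (hd : 2 ≤ d) (hm0 : m ≠ 0)
    (hm : m ≤ 2 * d) :
    encode s m ≤ 504 * (s + 1) * d * Nat.log 2 d ^ 2 := by
  have hlog : Nat.log 2 m + 1 ≤ 3 * Nat.log 2 d := by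
    have h1 : Nat.log 2 m ≤ Nat.log 2 (d * 2) := Nat.log_mono_right (by omega)
    rw [Nat.log_mul_base one_lt_two (by omega)] at h1
    have h2 : 0 < Nat.log 2 d := Nat.log_pos one_lt_two hd
    omega
  calc encode s m ≤ 28 * (s + 1) * m * (Nat.log 2 m + 1) ^ 2 := encode_le s hm0
    _ ≤ 28 * (s + 1) * (2 * d) * (3 * Nat.log 2 d) ^ 2 := by gcongr
    _ = 504 * (s + 1) * d * Nat.log 2 d ^ 2 := by ring

/-- `(s, m)` codes the interval `[s, slotEnd (s, m))`, of length `m * 2 ^ ν₂(s)`. -/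
def slotEnd (a : ℕ × ℕ) : ℕ := a.1 + a.2 * 2 ^ padicValNat 2 a.1

def Nested (a b : ℕ × ℕ) : Prop := b.1 ≤ a.1 ∧ slotEnd a ≤ slotEnd b

instance : DecidableRel Nested := fun _ _ => inferInstanceAs (Decidable (_ ∧ _))

lemma lt_slotEnd {a : ℕ × ℕ} (ha : 0 < a.2) : a.1 < slotEnd a := by
  unfold slotEnd; have := Nat.two_pow_pos (padicValNat 2 a.1); nlinarith

lemma exists_padicValNat_two_eq_near (p j : ℕ) :
    ∃ s, p ≤ s ∧ s ≤ p + 3 * 2 ^ j ∧ padicValNat 2 s = j := by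
  refine ⟨2 ^ j * (2 * (p / 2 ^ (j + 1) + 1) + 1), ?_, ?_, padicValNat_two_pow_mul_odd _ _⟩ <;>
  · have h1 := Nat.div_mul_le_self p (2 ^ (j + 1))
    have h2 := Nat.lt_div_mul_add (a := p) (Nat.two_pow_pos (j + 1))
    rw [pow_succ] at h1 h2 ⊢
    generalize p / (2 ^ j * 2) = q at *
    nlinarith

lemma exists_mul_two_pow_near {d t : ℕ} (hd : 0 < d) (hdt : d ≤ t) :
    ∃ m j, 0 < m ∧ m ≤ 2 * d ∧ t ≤ m * 2 ^ j ∧ m * 2 ^ j ≤ t + 2 ^ j ∧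
      d * 2 ^ j ≤ t := by
  set j := Nat.log 2 (t / d)
  have hlo : 2 ^ j ≤ t / d := Nat.pow_log_le_self 2 (Nat.div_pos hdt hd).ne'
  have hhi : t / d < 2 ^ (j + 1) := Nat.lt_pow_succ_log_self one_lt_two _
  have hdj : d * 2 ^ j ≤ t := mul_comm d _ ▸ (Nat.le_div_iff_mul_le hd).mp hlo
  have hlt : t / 2 ^ j < 2 * d := by
    rw [Nat.div_lt_iff_lt_mul (Nat.two_pow_pos j)]
    have := (Nat.div_lt_iff_lt_mul hd).mp hhi
    rw [pow_succ] at this; linarith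
  refine ⟨t / 2 ^ j + 1, j, Nat.succ_pos _, hlt, ?_, ?_, hdj⟩ <;> rw [add_one_mul]
  · exact (Nat.lt_div_mul_add (Nat.two_pow_pos j)).le
  · exact Nat.add_le_add_right (Nat.div_mul_le_self t _) _

lemma exists_slot {d t : ℕ} (hd : 0 < d) (hdt : d ≤ t) (p : ℕ) :
    ∃ a : ℕ × ℕ, p ≤ a.1 ∧ 0 < a.2 ∧ a.2 ≤ 2 * d ∧ a.1 + t ≤ slotEnd a ∧
      d * slotEnd a ≤ d * p + (d + 4) * t := by
  obtain ⟨m, j, hm0, hm, hlo, hhi, hdj⟩ := exists_mul_two_pow_near hd hdt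
  obtain ⟨s, hps, hsp, hj⟩ := exists_padicValNat_two_eq_near p j
  refine ⟨(s, m), hps, hm0, hm, ?_, ?_⟩ <;> simp only [slotEnd, hj]
  · omega
  · nlinarith

/-- Space reserved per node of a forest of height `k`; the factor `(d + 4) / d` pays for
rounding and aligning the root slots (`exists_slot`). -/
def room (d : ℕ) : ℕ → ℕ
  | 0 => d
  | k + 1 => (d + 4) * room d k / d + 1

section Room

variable {d : ℕ}

lemma le_room (hd : 0 < d) (k : ℕ) : d ≤ room d k := by
  induction k with
  | zero => exact le_rfl
  | succ k ih =>
    have : room d k ≤ (d + 4) * room d k / d :=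
      (Nat.le_div_iff_mul_le hd).mpr (by nlinarith)
    simp only [room]; omega

lemma add_four_mul_room_le (hd : 0 < d) (k : ℕ) : (d + 4) * room d k ≤ d * room d (k + 1) := by
  have := Nat.lt_div_mul_add (a := (d + 4) * room d k) hd
  simp only [room]; nlinarith

lemma room_mul_pow_le (hd : 0 < d) (k : ℕ) : room d k * d ^ k ≤ d * (d + 5) ^ k := by
  induction k with
  | zero => simp [room]
  | succ k ih =>
    have hstep : room d (k + 1) * d ≤ (d + 5) * room d k := by
      have := Nat.div_mul_le_self ((d + 4) * room d k) d
      have := le_room hd k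
      simp only [room]; nlinarith
    calc room d (k + 1) * d ^ (k + 1) = room d (k + 1) * d * d ^ k := by ring
      _ ≤ (d + 5) * (room d k * d ^ k) := by rw [← mul_assoc]; gcongr
      _ ≤ (d + 5) * (d * (d + 5) ^ k) := by gcongr
      _ = d * (d + 5) ^ (k + 1) := by ring

lemma add_five_pow_le (hd : 0 < d) : (d + 5) ^ d ≤ 243 * d ^ d := by
  have hd' : (0 : ℝ) < d := by exact_mod_cast hd
  have hexp : (1 + 5 / (d : ℝ)) ^ d ≤ 243 := by
    calc (1 + 5 / (d : ℝ)) ^ d = (1 - (-5) / d) ^ d := by ring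
      _ ≤ Real.exp 5 := by
          simpa using Real.one_sub_div_pow_le_exp_neg (n := d) (t := -5) (by linarith)
      _ = Real.exp 1 ^ 5 := by rw [← Real.exp_nat_mul]; norm_num
      _ ≤ 3 ^ 5 := by gcongr; exact Real.exp_one_lt_three.le
      _ = 243 := by norm_num
  have : ((d : ℝ) + 5) ^ d ≤ 243 * (d : ℝ) ^ d := by
    calc ((d : ℝ) + 5) ^ d = (d : ℝ) ^ d * (1 + 5 / d) ^ d := by
          rw [← mul_pow]; congr 1; field_simp
      _ ≤ (d : ℝ) ^ d * 243 := by gcongr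
      _ = 243 * (d : ℝ) ^ d := mul_comm _ _
  exact_mod_cast this

lemma room_le (hd : 0 < d) : room d d ≤ 243 * d := by
  have h : room d d * d ^ d ≤ 243 * d * d ^ d := by
    calc room d d * d ^ d ≤ d * (d + 5) ^ d := room_mul_pow_le hd d
      _ ≤ d * (243 * d ^ d) := by gcongr; exact add_five_pow_le hd
      _ = 243 * d * d ^ d := by ring
  exact Nat.le_of_mul_le_mul_right h (by positivity)

end Room

section Layout

variable {X : Type*} [PartialOrder X]

def ChainsLE (S : Finset X) (k : ℕ) : Prop :=
  ∀ c ⊆ S, (∀ u ∈ c, ∀ v ∈ c, u ≤ v ∨ v ≤ u) → #c ≤ k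

lemma ChainsLE.mono {S T : Finset X} {k : ℕ} (h : ChainsLE S k) (hTS : T ⊆ S) : ChainsLE T k :=
  fun c hc => h c (hc.trans hTS)

lemma ChainsLE.erase_of_isGreatest [DecidableEq X] {T : Finset X} {r : X} {k : ℕ}
    (h : ChainsLE T (k + 1)) (hr : IsGreatest (T : Set X) r) : ChainsLE (T.erase r) k := by
  intro c hc hchain
  have hrc : r ∉ c := fun hrc => (mem_erase.mp (hc hrc)).1 rfl
  have hcT : ∀ x ∈ c, x ≤ r := fun x hx => hr.2 (mem_of_mem_erase (hc hx))
  have := h (insert r c) (insert_subset hr.1 (hc.trans (erase_subset r T)))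
    (by simp only [mem_insert, forall_eq_or_imp, le_refl, true_or, true_and]
        exact ⟨fun v hv => Or.inr (hcT v hv), fun u hu => ⟨Or.inl (hcT u hu), hchain u hu⟩⟩)
  rw [card_insert_of_notMem hrc] at this
  omega

structure IsLayout (d : ℕ) (S : Finset X) (p e : ℕ) (F : X → ℕ × ℕ) : Prop where
  range : ∀ x ∈ S, p ≤ (F x).1 ∧ slotEnd (F x) ≤ e
  mantissa : ∀ x ∈ S, 0 < (F x).2 ∧ (F x).2 ≤ 2 * d
  -- strict on starts, so that distinct nodes never share an interval
  nested_of_lt : ∀ x ∈ S, ∀ y ∈ S, x < y →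
    (F y).1 < (F x).1 ∧ slotEnd (F x) ≤ slotEnd (F y)
  disjoint : ∀ x ∈ S, ∀ y ∈ S, ¬ x ≤ y → ¬ y ≤ x →
    slotEnd (F x) ≤ (F y).1 ∨ slotEnd (F y) ≤ (F x).1

variable {d : ℕ} {S S₁ S₂ : Finset X} {p q e : ℕ} {F F₁ F₂ : X → ℕ × ℕ}

lemma isLayout_empty (d p : ℕ) (F : X → ℕ × ℕ) : IsLayout d ∅ p p F :=
  ⟨by simp, by simp, by simp, by simp⟩

lemma IsLayout.mono (h : IsLayout d S p e F) {p' e' : ℕ} (hp : p' ≤ p) (he : e ≤ e') :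
    IsLayout d S p' e' F :=
  { h with range := fun x hx => ⟨hp.trans (h.range x hx).1, (h.range x hx).2.trans he⟩ }

theorem IsLayout.le_iff (h : IsLayout d S p e F) {u v : X} (hu : u ∈ S) (hv : v ∈ S) :
    u ≤ v ↔ Nested (F u) (F v) := by
  refine ⟨fun huv => ?_, fun ⟨h₁, h₂⟩ => ?_⟩
  · rcases huv.eq_or_lt with rfl | huv
    · exact ⟨le_rfl, le_rfl⟩
    · exact (h.nested_of_lt u hu v hv huv).imp_left le_of_lt
  · by_contra huv
    have hu' := lt_slotEnd (h.mantissa u hu).1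
    by_cases hvu : v ≤ u
    · have := (h.nested_of_lt v hv u hu (lt_of_le_not_ge hvu huv)).1
      omega
    · have := lt_slotEnd (h.mantissa v hv).1
      rcases h.disjoint u hu v hv huv hvu with h' | h' <;> omega

lemma IsLayout.piecewise [DecidableEq X] (h₁ : IsLayout d S₁ p q F₁)
    (h₂ : IsLayout d S₂ q e F₂) (hpq : p ≤ q) (hqe : q ≤ e)
    (hinc : ∀ x ∈ S₁, ∀ y ∈ S₂, ¬ x ≤ y ∧ ¬ y ≤ x) :
    IsLayout d (S₁ ∪ S₂) p e (S₁.piecewise F₁ F₂) := by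
  have hF₂ : ∀ y ∈ S₂, S₁.piecewise F₁ F₂ y = F₂ y :=
    fun y hy => piecewise_eq_of_notMem _ _ _ fun hy₁ => (hinc y hy₁ y hy).1 le_rfl
  have hsep : ∀ x ∈ S₁, ∀ y ∈ S₂, slotEnd (F₁ x) ≤ (F₂ y).1 :=
    fun x hx y hy => (h₁.range x hx).2.trans (h₂.range y hy).1
  refine ⟨fun x hx => ?_, fun x hx => ?_, fun x hx y hy hxy => ?_,
    fun x hx y hy hxy hyx => ?_⟩ <;>
    simp only [mem_union] at hx <;> try simp only [mem_union] at hy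
  · rcases hx with hx | hx
    · rw [piecewise_eq_of_mem _ _ _ hx]
      exact ⟨(h₁.range x hx).1, (h₁.range x hx).2.trans hqe⟩
    · rw [hF₂ x hx]; exact ⟨hpq.trans (h₂.range x hx).1, (h₂.range x hx).2⟩
  · rcases hx with hx | hx
    · rw [piecewise_eq_of_mem _ _ _ hx]; exact h₁.mantissa x hx
    · rw [hF₂ x hx]; exact h₂.mantissa x hx
  · rcases hx with hx | hx <;> rcases hy with hy | hy
    · rw [piecewise_eq_of_mem _ _ _ hx, piecewise_eq_of_mem _ _ _ hy]
      exact h₁.nested_of_lt x hx y hy hxy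
    · exact absurd hxy.le (hinc x hx y hy).1
    · exact absurd hxy.le (hinc y hy x hx).2
    · rw [hF₂ x hx, hF₂ y hy]; exact h₂.nested_of_lt x hx y hy hxy
  · rcases hx with hx | hx <;> rcases hy with hy | hy
    · rw [piecewise_eq_of_mem _ _ _ hx, piecewise_eq_of_mem _ _ _ hy]
      exact h₁.disjoint x hx y hy hxy hyx
    · rw [piecewise_eq_of_mem _ _ _ hx, hF₂ y hy]; exact Or.inl (hsep x hx y hy)
    · rw [hF₂ x hx, piecewise_eq_of_mem _ _ _ hy]; exact Or.inr (hsep y hy x hx)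
    · rw [hF₂ x hx, hF₂ y hy]; exact h₂.disjoint x hx y hy hxy hyx

lemma IsLayout.update_top [DecidableEq X] {r : X} {a : ℕ × ℕ}
    (h : IsLayout d S (a.1 + 1) (slotEnd a) F) (hr : ∀ x ∈ S, x < r)
    (ha : 0 < a.2 ∧ a.2 ≤ 2 * d) :
    IsLayout d (insert r S) a.1 (slotEnd a) (Function.update F r a) := by
  have hF : ∀ x ∈ S, Function.update F r a x = F x :=
    fun x hx => Function.update_of_ne (hr x hx).ne _ _
  refine ⟨fun x hx => ?_, fun x hx => ?_, fun x hx y hy hxy => ?_,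
    fun x hx y hy hxy hyx => ?_⟩ <;>
    simp only [mem_insert] at hx <;> try simp only [mem_insert] at hy
  · rcases hx with rfl | hx
    · simp
    · rw [hF x hx]; exact ⟨by linarith [(h.range x hx).1], (h.range x hx).2⟩
  · rcases hx with rfl | hx
    · simpa using ha
    · rw [hF x hx]; exact h.mantissa x hx
  · rcases hx with rfl | hx <;> rcases hy with rfl | hy
    · exact absurd hxy (lt_irrefl _)
    · exact absurd (hxy.trans (hr y hy)) (lt_irrefl _)
    · rw [hF x hx, Function.update_self]
      exact ⟨by linarith [(h.range x hx).1], (h.range x hx).2⟩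
    · rw [hF x hx, hF y hy]; exact h.nested_of_lt x hx y hy hxy
  · rcases hx with rfl | hx <;> rcases hy with rfl | hy
    · exact absurd le_rfl hxy
    · exact absurd (hr y hy).le hyx
    · exact absurd (hr x hx).le hxy
    · rw [hF x hx, hF y hy]; exact h.disjoint x hx y hy hxy hyx

lemma exists_layout_of_isGreatest [DecidableEq X] (hd : 0 < d) {T : Finset X} {r : X} {k : ℕ}
    (hr : IsGreatest (T : Set X) r)
    (ih : ∀ p, ∃ F, IsLayout d (T.erase r) p (p + #(T.erase r) * room d k) F) (p : ℕ) :
    ∃ F, IsLayout d T p (p + #T * room d (k + 1)) F := by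
  have hT : 1 ≤ #T := card_pos.mpr ⟨r, hr.1⟩
  have hroom := le_room hd k
  obtain ⟨a, hpa, hm0, hm, hfit, hend⟩ :=
    exists_slot hd (t := #T * room d k) (le_mul_of_one_le_of_le hT hroom) p
  obtain ⟨F, hF⟩ := ih (a.1 + 1)
  have hinner : a.1 + 1 + #(T.erase r) * room d k ≤ slotEnd a := by
    have : #(T.erase r) * room d k + 1 ≤ #T * room d k := by
      rw [← card_erase_add_one hr.1, add_one_mul]; omega
    omega
  have houter : slotEnd a ≤ p + #T * room d (k + 1) := by
    have := add_four_mul_room_le hd k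
    refine Nat.le_of_mul_le_mul_left (hend.trans ?_) hd
    nlinarith
  refine ⟨Function.update F r a, ?_⟩
  rw [← insert_erase hr.1]
  have hlt : ∀ x ∈ T.erase r, x < r :=
    fun x hx => lt_of_le_of_ne (hr.2 (mem_of_mem_erase hx)) (ne_of_mem_erase hx)
  exact ((hF.mono le_rfl hinner).update_top hlt ⟨hm0, hm⟩).mono hpa (by rwa [insert_erase hr.1])

theorem exists_layout (hX : IsTreeOrder X) (hd : 0 < d) (S : Finset X) {k : ℕ}
    (hk : ChainsLE S k) (p : ℕ) : ∃ F, IsLayout d S p (p + #S * room d k) F := by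
  classical
  induction S using Finset.strongInduction generalizing k p with
  | H S ih =>
  rcases S.eq_empty_or_nonempty with rfl | hne
  · exact ⟨fun _ => (0, 0), by simpa using isLayout_empty d p _⟩
  obtain ⟨r, hrS, hrmax⟩ := S.exists_maximal hne
  obtain ⟨k, rfl⟩ : ∃ k', k = k' + 1 :=
    Nat.exists_eq_add_one.mpr (hk {r} (singleton_subset_iff.mpr hrS) (by simp))
  set T := S.filter (· ≤ r)
  set R := S.filter (¬ · ≤ r)
  have hrT : IsGreatest (T : Set X) r :=
    ⟨mem_filter.mpr ⟨hrS, le_rfl⟩, fun x hx => (mem_filter.mp hx).2⟩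
  obtain ⟨F₁, h₁⟩ := exists_layout_of_isGreatest hd hrT
    (ih _ ((erase_ssubset hrT.1).trans_subset (filter_subset _ S))
      ((hk.mono (filter_subset _ S)).erase_of_isGreatest hrT)) p
  obtain ⟨F₂, h₂⟩ := ih R (filter_ssubset.mpr ⟨r, hrS, not_not.mpr le_rfl⟩)
    (hk.mono (filter_subset _ S)) (p + #T * room d (k + 1))
  have h := h₁.piecewise h₂ (Nat.le_add_right _ _) (Nat.le_add_right _ _) fun x hx y hy =>
    hX.incomparable (hrT.2 hx) (mem_filter.mp hy).2 (hrmax (mem_filter.mp hy).1)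
  rw [filter_union_filter_not_eq, add_assoc, ← add_mul, card_filter_add_card_filter_not] at h
  exact ⟨_, h⟩

end Layout

def decoder (a b : ℕ) : Bool :=
  decide (Nested (decode b) (decode a))

lemma injective_of_le_iff {X α : Type*} [PartialOrder X] {L : X → α} {D : α → α → Bool}
    (h : ∀ u v, u ≤ v ↔ D (L v) (L u) = true) : Function.Injective L := fun u v huv =>
  le_antisymm ((h u v).mpr (huv ▸ (h v v).mp le_rfl)) ((h v u).mpr (huv ▸ (h u u).mp le_rfl))

end AncestryScheme

open AncestryScheme in
/-- A single decoder `D` works for the family of all forests: any node of an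
`n`-node forest (`n ≥ 2`) of depth at most `d` (`d ≥ 2`) gets a label bounded
by `C · n · d² · (log₂ d)²`, i.e. of
`log₂ n + 2 log₂ d + 2 log₂ log₂ d + O(1)` bits. -/
theorem ancestry_scheme_bounded_depth_universal :
    ∃ (C : ℕ) (D : ℕ → ℕ → Bool),
      ∀ (X : Type) [Fintype X] [PartialOrder X], ∀ d : ℕ,
        IsTreeOrder X → 2 ≤ Fintype.card X → 2 ≤ d → HeightLE X d →
        ∃ L : X → ℕ,
          Function.Injective L ∧
          (∀ x : X, L x ≤ C * Fintype.card X * d ^ 2 * (Nat.log 2 d) ^ 2) ∧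
          (∀ u v : X, u ≤ v ↔ D (L v) (L u) = true) := by
  classical
  refine ⟨122472, decoder, fun X _ _ d hX _ hd hh => ?_⟩
  obtain ⟨F, hF⟩ := exists_layout hX (d := d) (by omega) univ (fun c _ hc => hh c hc) 0
  let L : X → ℕ := fun x => encode (F x).1 (F x).2
  have hiff : ∀ u v : X, u ≤ v ↔ decoder (L v) (L u) = true := fun u v => by
    simpa only [L, decoder, decode_encode, decide_eq_true_iff] using
      hF.le_iff (mem_univ u) (mem_univ v)
  refine ⟨L, injective_of_le_iff hiff, fun x => ?_, hiff⟩
  obtain ⟨hm0, hm⟩ := hF.mantissa x (mem_univ x)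
  have hs : (F x).1 + 1 ≤ Fintype.card X * (243 * d) := by
    have := lt_slotEnd hm0
    have := (hF.range x (mem_univ x)).2
    have := Nat.mul_le_mul_left (Fintype.card X) (room_le (d := d) (by omega))
    rw [card_univ] at *; omega
  calc L x ≤ 504 * ((F x).1 + 1) * d * Nat.log 2 d ^ 2 :=
        encode_le_of_le_two_mul _ hd hm0.ne' hm
    _ ≤ 504 * (Fintype.card X * (243 * d)) * d * Nat.log 2 d ^ 2 := by gcongr
    _ = 122472 * Fintype.card X * d ^ 2 * Nat.log 2 d ^ 2 := by ring
end

section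
/- There exists a constant C such that for all integers n ≥ 1 and d ≥ 1 there exists a family 𝓘 of at most C · n · d² intervals of natural numbers, each contained in [0, C·n], with the following property: for every finite tree order (X, ≤) with at most n elements and height at most d, there is an injective map I : X → 𝓘 such that for all u, v ∈ X, u ≤ v if and only if I(u) ⊆ I(v). -/
open Set

namespace IsTreeOrder

variable {X : Type*} [PartialOrder X]

theorem subtype (hX : IsTreeOrder X) (s : Set X) : IsTreeOrder s :=
  fun x y z hxy hxz => hX x y z hxy hxz

theorem not_le_of_le_of_isMax (hX : IsTreeOrder X) {r u v : X} (hr : IsMax r) (hu : u ≤ r)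
    (hv : ¬v ≤ r) : ¬u ≤ v :=
  fun huv => (hX u v r huv hu).elim hv fun hrv => hv (hr hrv)

end IsTreeOrder

namespace HeightLE

variable {X : Type*} [PartialOrder X] {h : ℕ}

theorem subtype (hX : HeightLE X h) (s : Set X) : HeightLE s h := by
  intro c hc
  simpa using hX (c.map (Function.Embedding.subtype _)) (by simpa using hc)

theorem Iio (hX : HeightLE X (h + 1)) (r : X) : HeightLE (Iio r) h := by
  classical
  intro c hc
  have hr : r ∉ c.map (Function.Embedding.subtype _) := by simp
  have := hX (insert r (c.map (Function.Embedding.subtype _))) <| by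
    simp only [Finset.mem_insert, Finset.mem_map, Function.Embedding.subtype_apply]
    rintro _ (rfl | ⟨u, hu, rfl⟩) _ (rfl | ⟨v, hv, rfl⟩)
    exacts [.inl le_rfl, .inr (le_of_lt v.2), .inl (le_of_lt u.2), hc u hu v hv]
  simpa [Finset.card_insert_of_notMem hr] using this

theorem pos [Nonempty X] (hX : HeightLE X h) : 0 < h := by
  obtain ⟨x⟩ := ‹Nonempty X›
  exact hX {x} (by simp)

end HeightLE

theorem Nat.card_Iio_add_one_add_card_compl_Iic {X : Type*} [PartialOrder X] [Finite X] (r : X) :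
    Nat.card (Iio r) + 1 + Nat.card ((Iic r)ᶜ : Set X) = Nat.card X := by
  simp only [Nat.card_coe_set_eq]
  rw [← ncard_insert_of_notMem (s := Iio r) (lt_irrefl r) (toFinite _), Iio_insert,
    ncard_add_ncard_compl]

namespace LegalContainment

def grain (d ℓ : ℕ) : ℕ := 2 ^ Nat.log 2 (ℓ / (2 * d))

variable {d : ℕ}

theorem grain_pos (d ℓ : ℕ) : 0 < grain d ℓ := Nat.two_pow_pos _

theorem grain_dvd_grain {ℓ ℓ' : ℕ} (h : ℓ ≤ ℓ') : grain d ℓ ∣ grain d ℓ' :=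
  pow_dvd_pow 2 (Nat.log_mono_right (Nat.div_le_div_right h))

theorem two_mul_mul_grain_le (d ℓ : ℕ) : 2 * d * grain d ℓ ≤ ℓ + 2 * d := by
  rcases eq_or_ne (ℓ / (2 * d)) 0 with h | h
  · simp [grain, h]
  · have h₁ := Nat.mul_le_mul_left (2 * d) (Nat.pow_log_le_self 2 h)
    have h₂ := Nat.mul_div_le ℓ (2 * d)
    unfold grain
    omega

theorem lt_four_mul_mul_grain (hd : 0 < d) (ℓ : ℕ) : ℓ < 4 * d * grain d ℓ := by
  have := (Nat.div_lt_iff_lt_mul (by omega)).mp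
    (Nat.lt_pow_succ_log_self one_lt_two (ℓ / (2 * d)))
  rw [pow_succ] at this
  rw [grain]
  linarith

theorem grain_dvd_two_mul_grain (hd : 0 < d) {ℓ ℓ' : ℕ} (h : ℓ' < 8 * d * grain d ℓ) :
    grain d ℓ' ∣ 2 * grain d ℓ := by
  rw [grain, grain, ← pow_succ']
  refine pow_dvd_pow 2 (Nat.lt_succ_iff.mp (Nat.log_lt_of_lt_pow' (by simp) ?_))
  rw [Nat.div_lt_iff_lt_mul (by omega), pow_succ, pow_succ]
  rw [grain] at h
  linarith

theorem exists_dvd_mem_Ico {q : ℕ} (hq : 0 < q) (m : ℕ) : ∃ k, q ∣ k ∧ m ≤ k ∧ k < m + q := by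
  refine ⟨q * ((m + (q - 1)) / q), dvd_mul_right _ _, ?_, ?_⟩
  · have := Nat.div_add_mod (m + (q - 1)) q
    have := Nat.mod_lt (m + (q - 1)) hq
    omega
  · have := Nat.mul_div_le (m + (q - 1)) q
    omega

/-- `S` is `t` rounded up to a multiple of `2 * grain d t`. -/
theorem exists_aligned_length (hd : 0 < d) (t : ℕ) :
    ∃ S, t ≤ S ∧ S < t + 2 * grain d t ∧ grain d S ∣ 2 * grain d t ∧ grain d S ∣ S := by
  obtain ⟨S, hdvd, htS, hSt⟩ := exists_dvd_mem_Ico (Nat.mul_pos two_pos (grain_pos d t)) t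
  have hS : S < 8 * d * grain d t := by
    nlinarith [lt_four_mul_mul_grain hd t, grain_pos d t]
  have hgS := grain_dvd_two_mul_grain hd hS
  exact ⟨S, htS, hSt, hgS, hgS.trans hdvd⟩

def block (p : ℕ × ℕ) : Set ℕ := Ico p.1 (p.1 + p.2)

def IsAligned (d : ℕ) (p : ℕ × ℕ) : Prop :=
  0 < p.2 ∧ grain d p.2 ∣ p.1 ∧ grain d p.2 ∣ p.2

instance (d : ℕ) : DecidablePred (IsAligned d) := fun _ => inferInstanceAs (Decidable (_ ∧ _))

theorem block_subset_block_iff {p q : ℕ × ℕ} (hp : 0 < p.2) :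
    block p ⊆ block q ↔ q.1 ≤ p.1 ∧ p.1 + p.2 ≤ q.1 + q.2 :=
  Ico_subset_Ico_iff (by omega)

theorem block_eq_Icc {p : ℕ × ℕ} (hp : 0 < p.2) : block p = Icc p.1 (p.1 + p.2 - 1) := by
  rw [block, ← Ico_add_one_right_eq_Icc, Nat.sub_add_cancel (by omega)]

theorem IsAligned.shift {p : ℕ × ℕ} (hp : IsAligned d p) {s : ℕ} (hs : grain d p.2 ∣ s) :
    IsAligned d (s + p.1, p.2) :=
  ⟨hp.1, dvd_add hs hp.2.1, hp.2.2⟩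

def alignedBlocks (d M : ℕ) : Finset (ℕ × ℕ) :=
  (Finset.range (M + 1) ×ˢ Finset.range (M + 1)).filter fun p => IsAligned d p ∧ p.1 + p.2 ≤ M

theorem sum_div_two_pow_le (L M : ℕ) : ∑ k ∈ Finset.range L, M / 2 ^ k ≤ 2 * M := by
  induction L generalizing M with
  | zero => simp
  | succ L ih =>
    have h := ih (M / 2)
    simp only [Nat.div_div_eq_div_mul, ← pow_succ'] at h
    rw [Finset.sum_range_succ', pow_zero, Nat.div_one]
    omega

theorem alignedBlocks_subset_biUnion (hd : 0 < d) (M : ℕ) :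
    alignedBlocks d M ⊆ (Finset.range (Nat.log 2 M + 1)).biUnion fun k =>
      (Finset.range (4 * d) ×ˢ Finset.range (M / 2 ^ k + 1)).image
        fun ij => (ij.2 * 2 ^ k, ij.1 * 2 ^ k) := by
  intro p hp
  simp only [alignedBlocks, Finset.mem_filter, Finset.mem_product, Finset.mem_range] at hp
  obtain ⟨-, ⟨hℓ, ha, hl⟩, hM⟩ := hp
  set k := Nat.log 2 (p.2 / (2 * d))
  have hlt : p.2 < 4 * d * 2 ^ k := lt_four_mul_mul_grain hd p.2
  simp only [Finset.mem_biUnion, Finset.mem_range, Finset.mem_image, Finset.mem_product]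
  refine ⟨k, ?_, (p.2 / 2 ^ k, p.1 / 2 ^ k), ⟨?_, ?_⟩, ?_⟩
  · exact Nat.lt_succ_of_le (Nat.log_mono_right ((Nat.div_le_self _ _).trans (by omega)))
  · exact (Nat.div_lt_iff_lt_mul (Nat.two_pow_pos k)).mpr (by linarith)
  · exact Nat.lt_succ_of_le (Nat.div_le_div_right (by omega))
  · exact Prod.ext (Nat.div_mul_cancel ha) (Nat.div_mul_cancel hl)

theorem card_alignedBlocks_le (hd : 0 < d) {M : ℕ} (hM : 0 < M) :
    (alignedBlocks d M).card ≤ 12 * d * M := by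
  classical
  set L := Nat.log 2 M
  calc (alignedBlocks d M).card
      ≤ ∑ k ∈ Finset.range (L + 1), 4 * d * (M / 2 ^ k + 1) := by
        refine (Finset.card_le_card (alignedBlocks_subset_biUnion hd M)).trans
          (Finset.card_biUnion_le.trans (Finset.sum_le_sum fun k _ => ?_))
        exact Finset.card_image_le.trans (by simp)
    _ = 4 * d * (∑ k ∈ Finset.range (L + 1), M / 2 ^ k + (L + 1)) := by
        rw [← Finset.mul_sum, Finset.sum_add_distrib]; simp
    _ ≤ 4 * d * (2 * M + M) := by
        have := sum_div_two_pow_le (L + 1) M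
        have := Nat.log_lt_self 2 hM.ne'
        gcongr; omega
    _ = 12 * d * M := by ring

def HasAlignedPacking (d W : ℕ) (X : Type*) [PartialOrder X] : Prop :=
  ∃ p : X → ℕ × ℕ, (∀ x, IsAligned d (p x) ∧ (p x).1 + (p x).2 ≤ W) ∧
    ∀ u v, u ≤ v ↔ block (p u) ⊆ block (p v)

variable {X : Type*} [PartialOrder X]

theorem hasAlignedPacking_of_isEmpty [IsEmpty X] : HasAlignedPacking d 0 X :=
  ⟨isEmptyElim, isEmptyElim, isEmptyElim⟩

theorem hasAlignedPacking_Iic {r : X} {W : ℕ} (hY : HasAlignedPacking d W (Iio r)) {Q S : ℕ}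
    (hQ : 0 < Q) (hQW : grain d W ∣ Q) (hS : W + Q ≤ S) (hSS : grain d S ∣ S) :
    HasAlignedPacking d S (Iic r) := by
  classical
  obtain ⟨p, hp, hle⟩ := hY
  let q : Iic r → ℕ × ℕ := fun x =>
    if hx : x.1 < r then (Q + (p ⟨x, hx⟩).1, (p ⟨x, hx⟩).2) else (0, S)
  have hq_lt (x : Iic r) (hx : x.1 < r) : q x = (Q + (p ⟨x, hx⟩).1, (p ⟨x, hx⟩).2) := dif_pos hx
  have hq_top (x : Iic r) (hx : ¬x.1 < r) : q x = (0, S) := dif_neg hx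
  have hq_aligned (x : Iic r) : IsAligned d (q x) ∧ (q x).1 + (q x).2 ≤ S := by
    by_cases hx : x.1 < r
    · obtain ⟨hal, hW⟩ := hp ⟨x, hx⟩
      rw [hq_lt x hx]
      exact ⟨hal.shift ((grain_dvd_grain (by omega)).trans hQW), by simp only; omega⟩
    · rw [hq_top x hx]
      exact ⟨⟨by omega, dvd_zero _, hSS⟩, by simp⟩
  refine ⟨q, hq_aligned, fun u v => ?_⟩
  rw [block_subset_block_iff (hq_aligned u).1.1]
  have hp_pos (x) := (hp x).1.1
  have hp_W (x) := (hp x).2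
  by_cases hu : u.1 < r <;> by_cases hv : v.1 < r
  · rw [hq_lt u hu, hq_lt v hv]
    refine (hle ⟨u, hu⟩ ⟨v, hv⟩).trans ?_
    rw [block_subset_block_iff (hp_pos _)]
    simp only
    omega
  · have huv : u ≤ v := hu.le.trans_eq (eq_of_le_of_not_lt v.2 hv).symm
    rw [hq_lt u hu, hq_top v hv]
    have := hp_W ⟨u, hu⟩
    exact iff_of_true huv (by simp only; omega)
  · have hvu : ¬u ≤ v := fun huv => hu (lt_of_le_of_lt huv hv)
    rw [hq_top u hu, hq_lt v hv]
    exact iff_of_false hvu (by simp only; omega)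
  · obtain rfl : u = v := Subtype.ext <|
      (eq_of_le_of_not_lt u.2 hu).trans (eq_of_le_of_not_lt v.2 hv).symm
    simp

theorem HasAlignedPacking.union {s : Set X} (hinc : ∀ u ∈ s, ∀ v ∉ s, ¬u ≤ v ∧ ¬v ≤ u)
    {W₁ W₂ : ℕ} (h₁ : HasAlignedPacking d W₁ s) (h₂ : HasAlignedPacking d W₂ (sᶜ : Set X))
    {Δ : ℕ} (hΔ : W₂ ≤ Δ) (hΔ₁ : grain d W₁ ∣ Δ) : HasAlignedPacking d (Δ + W₁) X := by
  classical
  obtain ⟨p₁, hp₁, hle₁⟩ := h₁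
  obtain ⟨p₂, hp₂, hle₂⟩ := h₂
  let q : X → ℕ × ℕ := fun x =>
    if hx : x ∈ s then (Δ + (p₁ ⟨x, hx⟩).1, (p₁ ⟨x, hx⟩).2) else p₂ ⟨x, hx⟩
  have hq₁ (x : X) (hx : x ∈ s) : q x = (Δ + (p₁ ⟨x, hx⟩).1, (p₁ ⟨x, hx⟩).2) := dif_pos hx
  have hq₂ (x : X) (hx : x ∉ s) : q x = p₂ ⟨x, hx⟩ := dif_neg hx
  have hq_aligned (x : X) : IsAligned d (q x) ∧ (q x).1 + (q x).2 ≤ Δ + W₁ := by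
    by_cases hx : x ∈ s
    · obtain ⟨hal, hW⟩ := hp₁ ⟨x, hx⟩
      rw [hq₁ x hx]
      exact ⟨hal.shift ((grain_dvd_grain (by omega)).trans hΔ₁), by simp only; omega⟩
    · obtain ⟨hal, hW⟩ := hp₂ ⟨x, hx⟩
      rw [hq₂ x hx]
      exact ⟨hal, by omega⟩
  refine ⟨q, hq_aligned, fun u v => ?_⟩
  rw [block_subset_block_iff (hq_aligned u).1.1]
  have hp₁_pos (x) := (hp₁ x).1.1
  have hp₂_pos (x) := (hp₂ x).1.1
  have hp₂_W (x) := (hp₂ x).2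
  by_cases hu : u ∈ s <;> by_cases hv : v ∈ s
  · rw [hq₁ u hu, hq₁ v hv]
    refine (hle₁ ⟨u, hu⟩ ⟨v, hv⟩).trans ?_
    rw [block_subset_block_iff (hp₁_pos _)]
    simp only
    omega
  · rw [hq₁ u hu, hq₂ v hv]
    have := hp₂_W ⟨v, hv⟩
    have := hp₁_pos ⟨u, hu⟩
    exact iff_of_false (hinc u hu v hv).1 (by simp only; omega)
  · rw [hq₂ u hu, hq₁ v hv]
    have := hp₂_W ⟨u, hu⟩
    have := hp₂_pos ⟨u, hu⟩
    exact iff_of_false (hinc v hv u hu).2 (by simp only; omega)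
  · rw [hq₂ u hu, hq₂ v hv]
    exact (hle₂ ⟨u, hu⟩ ⟨v, hv⟩).trans (block_subset_block_iff (hp₂_pos _))

/-- The root gets the block `[Δ, Δ + S)`, the forest below it is packed at offset `Q` inside that
block, and the rest of the forest is packed into `[0, WZ)`. -/
theorem exists_root_layout (hd : 0 < d) (W WZ : ℕ) :
    ∃ Q S Δ, 0 < Q ∧ grain d W ∣ Q ∧ W + Q ≤ S ∧ grain d S ∣ S ∧ WZ ≤ Δ ∧ grain d S ∣ Δ ∧
      d * (Δ + S) ≤ d * WZ + (d + 4) * W + 7 * d := by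
  set g := grain d W
  obtain ⟨S, hS₁, hS₂, hgS, hSS⟩ := exists_aligned_length hd (W + g)
  have hgS' := Nat.le_of_dvd (by have := grain_pos d (W + g); omega) hgS
  obtain ⟨Δ, hΔ, hΔ₁, hΔ₂⟩ := exists_dvd_mem_Ico (grain_pos d S) WZ
  refine ⟨g, S, Δ, grain_pos d W, dvd_rfl, hS₁, hSS, hΔ₁, hΔ, ?_⟩
  have h₁ : 2 * d * g ≤ W + 2 * d := two_mul_mul_grain_le d W
  have h₂ := two_mul_mul_grain_le d (W + g)
  have h₃ := Nat.mul_le_mul_left d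
    (show Δ + S ≤ WZ + (W + g) + 4 * grain d (W + g) by omega)
  have h₄ : g ≤ d * g := Nat.le_mul_of_pos_left g hd
  nlinarith

theorem width_step {d W WZ W' nZ nY n h : ℕ} (hW : d * W ≤ d * WZ + (d + 4) * W' + 7 * d)
    (hWZ : WZ * d ^ (h + 1) ≤ 7 * nZ * (d + 4) ^ (h + 1))
    (hW' : W' * d ^ h ≤ 7 * nY * (d + 4) ^ h) (hn : nY + 1 + nZ ≤ n) :
    W * d ^ (h + 1) ≤ 7 * n * (d + 4) ^ (h + 1) := by
  have hpow : d ^ (h + 1) ≤ (d + 4) ^ (h + 1) := Nat.pow_le_pow_left (by omega) _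
  calc W * d ^ (h + 1) = d * W * d ^ h := by ring
    _ ≤ (d * WZ + (d + 4) * W' + 7 * d) * d ^ h := Nat.mul_le_mul_right _ hW
    _ = WZ * d ^ (h + 1) + (d + 4) * (W' * d ^ h) + 7 * d ^ (h + 1) := by ring
    _ ≤ 7 * nZ * (d + 4) ^ (h + 1) + (d + 4) * (7 * nY * (d + 4) ^ h)
        + 7 * (d + 4) ^ (h + 1) := by gcongr
    _ = 7 * (nY + 1 + nZ) * (d + 4) ^ (h + 1) := by ring
    _ ≤ 7 * n * (d + 4) ^ (h + 1) := by gcongr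

/-- The width bound is `W ≤ 7 n (1 + 4 / d) ^ h` with the denominators cleared. -/
theorem exists_hasAlignedPacking (hd : 0 < d) (h : ℕ) (X : Type*) [PartialOrder X] [Finite X]
    (hX : IsTreeOrder X) (hh : HeightLE X h) :
    ∃ W, W * d ^ h ≤ 7 * Nat.card X * (d + 4) ^ h ∧ HasAlignedPacking d W X := by
  induction hn : Nat.card X using Nat.strong_induction_on generalizing X h with
  | _ n ih =>
  cases isEmpty_or_nonempty X
  · exact ⟨0, by simp, hasAlignedPacking_of_isEmpty⟩
  obtain ⟨h, rfl⟩ := Nat.exists_eq_add_one.mpr hh.pos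
  obtain ⟨r, -, hr⟩ :=
    Finite.exists_le_maximal (p := fun _ : X => True) (a := Classical.arbitrary X) trivial
  have hcard := Nat.card_Iio_add_one_add_card_compl_Iic r
  obtain ⟨W', hW', hY⟩ := ih _ (by omega) h (Iio r) (hX.subtype _) (hh.Iio r) rfl
  obtain ⟨WZ, hWZ, hZ⟩ :=
    ih _ (by omega) (h + 1) ((Iic r)ᶜ : Set X) (hX.subtype _) (hh.subtype _) rfl
  obtain ⟨Q, S, Δ, hQ, hQW, hS, hSS, hΔ, hΔS, hwidth⟩ := exists_root_layout hd W' WZ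
  refine ⟨Δ + S, width_step hwidth hWZ hW' (hcard.trans hn).le, ?_⟩
  refine (hasAlignedPacking_Iic hY hQ hQW hS hSS).union (fun u hu v hv => ⟨?_, ?_⟩) hZ hΔ hΔS
  · exact hX.not_le_of_le_of_isMax (maximal_true.mp hr) hu hv
  · exact fun hvu => hv (hvu.trans hu)

theorem add_four_pow_le (d : ℕ) : (d + 4) ^ d ≤ 55 * d ^ d := by
  rcases Nat.eq_zero_or_pos d with rfl | hd
  · simp
  have hd' : (0 : ℝ) < d := by exact_mod_cast hd
  have hexp : (1 + 4 / (d : ℝ)) ^ d ≤ 55 :=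
    calc (1 + 4 / (d : ℝ)) ^ d ≤ Real.exp (4 / d) ^ d := by
          gcongr; linarith [Real.add_one_le_exp (4 / (d : ℝ))]
      _ = Real.exp 1 ^ 4 := by rw [← Real.exp_nat_mul, ← Real.exp_nat_mul]; field_simp; norm_num
      _ ≤ 2.7182818286 ^ 4 := by gcongr; exact Real.exp_one_lt_d9.le
      _ ≤ 55 := by norm_num
  have key : ((d : ℝ) + 4) ^ d ≤ 55 * (d : ℝ) ^ d := by
    rw [show (d : ℝ) + 4 = d * (1 + 4 / d) by field_simp, mul_pow, mul_comm]
    gcongr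
  exact_mod_cast key

theorem exists_hasAlignedPacking_le (hd : 0 < d) {X : Type*} [PartialOrder X] [Finite X]
    (hX : IsTreeOrder X) (hh : HeightLE X d) :
    ∃ W ≤ 385 * Nat.card X, HasAlignedPacking d W X := by
  obtain ⟨W, hW, hpack⟩ := exists_hasAlignedPacking hd d X hX hh
  refine ⟨W, Nat.le_of_mul_le_mul_right ?_ (pow_pos hd d), hpack⟩
  calc W * d ^ d ≤ 7 * Nat.card X * (d + 4) ^ d := hW
    _ ≤ 7 * Nat.card X * (55 * d ^ d) := by gcongr; exact add_four_pow_le d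
    _ = 385 * Nat.card X * d ^ d := by ring

theorem HasAlignedPacking.exists_legal_mapping {X : Type*} [PartialOrder X] {W M : ℕ}
    (hX : HasAlignedPacking d W X) (hWM : W ≤ M) :
    ∃ I : X → Set ℕ, (∀ x, I x ∈ (alignedBlocks d M).image block) ∧ Function.Injective I ∧
      ∀ u v, u ≤ v ↔ I u ⊆ I v := by
  obtain ⟨p, hp, hle⟩ := hX
  refine ⟨block ∘ p, fun x => Finset.mem_image_of_mem _ ?_,
    fun u v huv => le_antisymm ((hle u v).2 huv.le) ((hle v u).2 huv.ge), hle⟩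
  obtain ⟨hal, hW⟩ := hp x
  simp only [alignedBlocks, Finset.mem_filter, Finset.mem_product, Finset.mem_range]
  exact ⟨⟨by omega, by omega⟩, hal, by omega⟩

end LegalContainment

open LegalContainment in
/-- There is a family of `O(n·d²)` intervals inside `[0, O(n)]` such that
every tree order with at most `n` elements and height at most `d` admits a
legal-containment mapping into the family: `u ≤ v` iff `I u ⊆ I v`. -/
theorem legal_containment_into_small_interval_family :
    ∃ C : ℕ, ∀ n d : ℕ, 1 ≤ n → 1 ≤ d →
      ∃ 𝓘 : Finset (Set ℕ),
        𝓘.card ≤ C * n * d ^ 2 ∧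
        (∀ J ∈ 𝓘, ∃ a b : ℕ, a ≤ b ∧ b ≤ C * n ∧ J = Set.Icc a b) ∧
        ∀ (X : Type) [Fintype X] [PartialOrder X],
          IsTreeOrder X → Fintype.card X ≤ n → HeightLE X d →
          ∃ I : X → Set ℕ,
            (∀ x : X, I x ∈ 𝓘) ∧
            Function.Injective I ∧
            (∀ u v : X, u ≤ v ↔ I u ⊆ I v) := by
  refine ⟨4620, fun n d hn hd => ⟨(alignedBlocks d (385 * n)).image block, ?_, ?_, ?_⟩⟩
  · calc _ ≤ (alignedBlocks d (385 * n)).card := Finset.card_image_le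
      _ ≤ 12 * d * (385 * n) := card_alignedBlocks_le hd (by omega)
      _ = 4620 * n * d := by ring
      _ ≤ 4620 * n * d ^ 2 := Nat.mul_le_mul_left _ (Nat.le_self_pow two_ne_zero d)
  · intro J hJ
    obtain ⟨p, hp, rfl⟩ := Finset.mem_image.mp hJ
    simp only [alignedBlocks, Finset.mem_filter, Finset.mem_product, Finset.mem_range] at hp
    have hpos := hp.2.1.1
    exact ⟨p.1, p.1 + p.2 - 1, by omega, by omega, block_eq_Icc hpos⟩
  · intro X _ _ hX hcard hh
    obtain ⟨W, hW, hpack⟩ := exists_hasAlignedPacking_le hd hX hh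
    rw [Nat.card_eq_fintype_card] at hW
    exact hpack.exists_legal_mapping (by omega)
end

section
/- There exists a constant C such that for all integers n ≥ 2 and d ≥ 2 there exist a natural number N ≤ C · n · d³ and a relation D : Fin N → Fin N → Prop such that for every finite tree order (X, ≤) with at most n elements and height at most d, there is an injective labeling L : X → Fin N satisfying: for all u, v ∈ X, v covers u (i.e., v is the parent of u) if and only if D(L(v), L(u)) holds. (Equivalently: a parenthood/adjacency-labeling scheme for rooted forests with at most n nodes and depth at most d using labels of log₂ n + 3 log₂ d + O(1) bits.) -/
/-!
Give every node `v` a block of `cap v` consecutive integers which contains the blocks of its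
children and is disjoint from the blocks of all other nodes of the same depth. Then `v` is the
parent of `u` iff `depth u = depth v + 1` and the block of `u` starts inside the block of `v`.

The size `cap v` is `1 + ∑ cap c` over the children `c` of `v`, rounded up to a multiple of a
power of two `2 ^ t ≈ cap v / Q`. Rounding costs a factor `1 + 1 / Q` per level, so for `Q = 2 d`
it costs at most a factor `2` in total and all blocks lie in `[0, 2 n)`; and a block is described
by `t`, its start `j * 2 ^ t` and its length `m * 2 ^ t` with `m ≤ 2 Q`. Laying out siblings in
order of decreasing `t` makes each block start at a multiple of its own `2 ^ t`, and packing
`(t, j)` as `2 ^ t * (2 * j + 1) < 4 n` gives `4 n * (2 Q + 1) * d = O(n d²)` labels.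
-/

namespace ForestLabel

open Finset
open scoped Classical

section Rounding

def grainExp (Q s : ℕ) : ℕ := Nat.log 2 (s / Q)

def roundUp (Q s : ℕ) : ℕ := 2 ^ grainExp Q s * (s ⌈/⌉ 2 ^ grainExp Q s)

variable (Q s : ℕ)

lemma le_roundUp : s ≤ roundUp Q s := le_smul_ceilDiv (Nat.two_pow_pos _)

lemma roundUp_lt : roundUp Q s < s + 2 ^ grainExp Q s := by
  have := Nat.mul_div_le (s + 2 ^ grainExp Q s - 1) (2 ^ grainExp Q s)
  have := Nat.one_le_two_pow (n := grainExp Q s)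
  rw [roundUp, Nat.ceilDiv_eq_add_pred_div]
  omega

lemma pow_grainExp_dvd_roundUp : 2 ^ grainExp Q s ∣ roundUp Q s := dvd_mul_right _ _

lemma grainExp_mono : Monotone (grainExp Q) :=
  fun _ _ h => Nat.log_mono_right (Nat.div_le_div_right h)

lemma pow_grainExp_sub_one_mul_le : (2 ^ grainExp Q s - 1) * Q ≤ s := by
  have : 2 ^ grainExp Q s - 1 ≤ s / Q := by
    rcases eq_or_ne (s / Q) 0 with h | h
    · simp [grainExp, h]
    · exact (Nat.sub_le _ _).trans (Nat.pow_log_le_self 2 h)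
  exact (Nat.mul_le_mul_right Q this).trans (Nat.div_mul_le_self s Q)

lemma roundUp_mul_le : roundUp Q s * Q ≤ s * (Q + 1) := by
  have h := pow_grainExp_sub_one_mul_le Q s
  have := roundUp_lt Q s
  calc roundUp Q s * Q ≤ (s + (2 ^ grainExp Q s - 1)) * Q := Nat.mul_le_mul_right Q (by omega)
    _ ≤ s * (Q + 1) := by rw [add_mul]; nlinarith

lemma roundUp_lt_mul {Q : ℕ} (hQ : 0 < Q) (s : ℕ) :
    roundUp Q s < (2 * Q + 1) * 2 ^ grainExp Q s := by
  have h : s / Q < 2 ^ (grainExp Q s + 1) := Nat.lt_pow_succ_log_self one_lt_two _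
  rw [Nat.div_lt_iff_lt_mul hQ, pow_succ] at h
  have := roundUp_lt Q s
  nlinarith

end Rounding

lemma succ_pow_mul_le {Q k : ℕ} (h : 2 * k ≤ Q) : (Q + 1) ^ k * Q ≤ (Q + 2 * k) * Q ^ k := by
  induction k with
  | zero => simp
  | succ k ih =>
    calc (Q + 1) ^ (k + 1) * Q = (Q + 1) * ((Q + 1) ^ k * Q) := by ring
      _ ≤ (Q + 1) * ((Q + 2 * k) * Q ^ k) := Nat.mul_le_mul_left _ (ih (by omega))
      _ ≤ (Q + 2 * (k + 1)) * Q ^ (k + 1) := by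
        rw [pow_succ]; nlinarith [Nat.zero_le (Q ^ k)]

lemma succ_pow_le_two_mul_pow {Q k : ℕ} (h : 2 * k ≤ Q) : (Q + 1) ^ k ≤ 2 * Q ^ k := by
  rcases Nat.eq_zero_or_pos Q with rfl | hQ
  · obtain rfl : k = 0 := by omega
    simp
  refine Nat.le_of_mul_le_mul_right ?_ hQ
  calc (Q + 1) ^ k * Q ≤ (Q + 2 * k) * Q ^ k := succ_pow_mul_le h
    _ ≤ 2 * Q ^ k * Q := by nlinarith [Nat.zero_le (Q ^ k)]

lemma eq_of_two_pow_mul_odd_eq {t t' j j' : ℕ} (h : 2 ^ t * (2 * j + 1) = 2 ^ t' * (2 * j' + 1)) :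
    t = t' ∧ j = j' := by
  have val : ∀ t j : ℕ, padicValNat 2 (2 ^ t * (2 * j + 1)) = t := fun t j => by
    rw [padicValNat.mul (by positivity) (by omega), padicValNat.prime_pow,
      padicValNat.eq_zero_of_not_dvd (by omega), add_zero]
  obtain rfl : t = t' := by rw [← val t j, h, val]
  exact ⟨rfl, by simpa using h⟩

section Tree

variable {X : Type*} [PartialOrder X] [Fintype X]

noncomputable def ancestors (v : X) : Finset X := {w | v < w}

noncomputable def depth (v : X) : ℕ := #(ancestors v)

noncomputable def subtree (v : X) : Finset X := {w | w ≤ v}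

noncomputable def children (v : X) : Finset X := {w | w ⋖ v}

noncomputable def siblings (v : X) : Finset X := {w | ancestors w = ancestors v}

@[simp] lemma mem_ancestors {v w : X} : w ∈ ancestors v ↔ v < w := by simp [ancestors]

@[simp] lemma mem_subtree {v w : X} : w ∈ subtree v ↔ w ≤ v := by simp [subtree]

@[simp] lemma mem_children {v w : X} : w ∈ children v ↔ w ⋖ v := by simp [children]

@[simp] lemma mem_siblings {v w : X} : w ∈ siblings v ↔ ancestors w = ancestors v := by
  simp [siblings]

lemma card_subtree_lt_of_lt {u v : X} (h : u < v) : #(subtree u) < #(subtree v) :=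
  card_lt_card <| ssubset_iff_of_subset (fun w hw => by simp_all [h.le.trans'])
    |>.2 ⟨v, by simp, by simpa using h.not_ge⟩

lemma depth_eq_zero_iff {v : X} : depth v = 0 ↔ ancestors v = ∅ := card_eq_zero

lemma exists_covBy_of_depth_ne_zero {u : X} (h : depth u ≠ 0) : ∃ p, u ⋖ p := by
  obtain ⟨w, hw⟩ := nonempty_of_ne_empty (mt depth_eq_zero_iff.2 h)
  obtain ⟨p, hp, -⟩ := exists_covBy_le_of_lt (mem_ancestors.1 hw)
  exact ⟨p, hp⟩

lemma isAntichain_siblings (v : X) : IsAntichain (· ≤ ·) (siblings v : Set X) := by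
  intro w hw w' hw' hne hle
  have : w' ∈ ancestors w' := by
    rw [(mem_siblings.1 hw'), ← mem_siblings.1 hw]
    exact mem_ancestors.2 (lt_of_le_of_ne hle hne)
  exact lt_irrefl w' (mem_ancestors.1 this)

lemma isAntichain_children (v : X) : IsAntichain (· ≤ ·) (children v : Set X) :=
  fun _ hc _ hc' hne hle => (mem_children.1 hc).2 (lt_of_le_of_ne hle hne) (mem_children.1 hc').lt

variable (hT : IsTreeOrder X)
include hT

lemma ancestors_of_covBy {u v : X} (h : u ⋖ v) : ancestors u = insert v (ancestors v) := by
  ext w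
  simp only [mem_ancestors, mem_insert]
  refine ⟨fun hw => ?_, ?_⟩
  · rcases hT u w v hw.le h.lt.le with hwv | hvw
    · exact .inl (hwv.eq_of_not_lt fun hlt => h.2 hw hlt)
    · exact (eq_or_lt_of_le hvw).imp Eq.symm id
  · rintro (rfl | hw)
    exacts [h.lt, h.lt.trans hw]

lemma depth_of_covBy {u v : X} (h : u ⋖ v) : depth u = depth v + 1 := by
  rw [depth, ancestors_of_covBy hT h, card_insert_of_notMem (by simp), depth]

lemma siblings_of_covBy {u v : X} (h : u ⋖ v) : siblings u = children v := by
  ext w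
  rw [mem_siblings, mem_children, ancestors_of_covBy hT h]
  refine ⟨fun hw => ⟨mem_ancestors.1 (hw ▸ mem_insert_self v _), fun x hwx hxv => ?_⟩,
    fun hw => ancestors_of_covBy hT hw⟩
  have := hw ▸ mem_ancestors.2 hwx
  simp only [mem_insert, mem_ancestors] at this
  rcases this with rfl | hvx
  exacts [lt_irrefl _ hxv, lt_asymm hvx hxv]

lemma depth_lt {d : ℕ} (hH : HeightLE X d) (v : X) : depth v < d := by
  have hchain := hH (insert v (ancestors v)) <| by
    simp only [mem_insert, mem_ancestors]
    rintro u (rfl | hu) w (rfl | hw)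
    exacts [.inl le_rfl, .inl hw.le, .inr hu.le, hT v u w hu.le hw.le]
  rwa [card_insert_of_notMem (by simp)] at hchain

lemma sum_card_subtree_le {s t : Finset X} (hs : IsAntichain (· ≤ ·) (s : Set X))
    (hst : ∀ w ∈ s, subtree w ⊆ t) : ∑ w ∈ s, #(subtree w) ≤ #t := by
  rw [← card_biUnion]
  · exact card_le_card (biUnion_subset.2 hst)
  · intro w hw w' hw' hne
    refine disjoint_left.2 fun x hx hx' => ?_
    rcases hT x w w' (mem_subtree.1 hx) (mem_subtree.1 hx') with h | h
    exacts [hs hw hw' hne h, hs hw' hw (Ne.symm hne) h]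

lemma one_add_sum_card_subtree_children_le (v : X) :
    1 + ∑ c ∈ children v, #(subtree c) ≤ #(subtree v) := by
  have := sum_card_subtree_le hT (isAntichain_children v) (t := (subtree v).erase v) <| by
    intro c hc w hw
    have hwv := (mem_subtree.1 hw).trans_lt (mem_children.1 hc).lt
    simpa using ⟨hwv.ne, hwv.le⟩
  have hv : v ∈ subtree v := by simp
  rw [card_erase_of_mem hv] at this
  have := card_pos.2 ⟨v, hv⟩
  omega

end Tree

section Capacity

variable (Q : ℕ) {X : Type*} [PartialOrder X] [Fintype X]

noncomputable def cap (v : X) : ℕ :=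
  roundUp Q (1 + ∑ c ∈ (children v).attach, cap c.1)
termination_by #(subtree v)
decreasing_by exact card_subtree_lt_of_lt (mem_children.1 c.2).lt

noncomputable def demand (v : X) : ℕ := 1 + ∑ c ∈ children v, cap Q c

noncomputable def grain (v : X) : ℕ := grainExp Q (demand Q v)

lemma cap_eq_roundUp (v : X) : cap Q v = roundUp Q (demand Q v) := by
  rw [cap, demand, sum_attach (children v) (cap Q)]

lemma demand_le_cap (v : X) : demand Q v ≤ cap Q v := cap_eq_roundUp Q v ▸ le_roundUp Q _

lemma cap_pos (v : X) : 0 < cap Q v :=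
  (Nat.lt_one_add_iff.2 (Nat.zero_le _)).trans_le (demand_le_cap Q v)

lemma cap_lt_demand_of_covBy {u v : X} (h : u ⋖ v) : cap Q u < demand Q v :=
  Nat.lt_one_add_iff.2 (single_le_sum (fun _ _ => Nat.zero_le _) (mem_children.2 h))

lemma grain_mono : Monotone (grain Q : X → ℕ) := by
  let := Fintype.toLocallyFiniteOrder (α := X)
  exact (monotone_iff_forall_covBy _).2 fun u v h =>
    grainExp_mono Q ((demand_le_cap Q u).trans (cap_lt_demand_of_covBy Q h).le)

lemma pow_grain_dvd_cap (v : X) : 2 ^ grain Q v ∣ cap Q v :=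
  cap_eq_roundUp Q v ▸ pow_grainExp_dvd_roundUp Q _

lemma cap_lt_mul_pow_grain (hQ : 0 < Q) (v : X) : cap Q v < (2 * Q + 1) * 2 ^ grain Q v :=
  cap_eq_roundUp Q v ▸ roundUp_lt_mul hQ _

variable {Q} {d : ℕ} (hT : IsTreeOrder X) (hH : HeightLE X d)
include hT hH

lemma cap_mul_pow_le (v : X) :
    cap Q v * Q ^ (d - depth v) ≤ #(subtree v) * (Q + 1) ^ (d - depth v) := by
  induction v using WellFoundedLT.induction with
  | _ v ih =>
  obtain ⟨e, he⟩ : ∃ e, d - depth v = e + 1 :=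
    ⟨d - depth v - 1, by have := depth_lt hT hH v; omega⟩
  have hchild : ∀ c ∈ children v, cap Q c * Q ^ e ≤ #(subtree c) * (Q + 1) ^ e := by
    intro c hc
    have hcv := mem_children.1 hc
    have hde : d - depth c = e := by rw [depth_of_covBy hT hcv]; omega
    simpa [hde] using ih c hcv.lt
  have hdemand : demand Q v * Q ^ e ≤ #(subtree v) * (Q + 1) ^ e :=
    calc demand Q v * Q ^ e = Q ^ e + ∑ c ∈ children v, cap Q c * Q ^ e := by
          rw [demand, add_mul, one_mul, sum_mul]
      _ ≤ (Q + 1) ^ e + ∑ c ∈ children v, #(subtree c) * (Q + 1) ^ e :=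
          add_le_add (Nat.pow_le_pow_left (Nat.le_succ Q) e) (sum_le_sum hchild)
      _ = (1 + ∑ c ∈ children v, #(subtree c)) * (Q + 1) ^ e := by
          rw [add_mul, one_mul, sum_mul]
      _ ≤ #(subtree v) * (Q + 1) ^ e :=
          Nat.mul_le_mul_right _ (one_add_sum_card_subtree_children_le hT v)
  rw [he]
  calc cap Q v * Q ^ (e + 1) = roundUp Q (demand Q v) * Q * Q ^ e := by
        rw [cap_eq_roundUp]; ring
    _ ≤ demand Q v * (Q + 1) * Q ^ e := Nat.mul_le_mul_right _ (roundUp_mul_le Q _)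
    _ = (Q + 1) * (demand Q v * Q ^ e) := by ring
    _ ≤ (Q + 1) * (#(subtree v) * (Q + 1) ^ e) := Nat.mul_le_mul_left _ hdemand
    _ = #(subtree v) * (Q + 1) ^ (e + 1) := by ring

lemma cap_le_two_mul_card_subtree (hQ : 2 * d ≤ Q) (v : X) : cap Q v ≤ 2 * #(subtree v) := by
  have hk : 2 * (d - depth v) ≤ Q := by omega
  have hpos : 0 < Q ^ (d - depth v) := pow_pos (by have := depth_lt hT hH v; omega) _
  refine Nat.le_of_mul_le_mul_right ?_ hpos
  calc cap Q v * Q ^ (d - depth v) ≤ #(subtree v) * (Q + 1) ^ (d - depth v) :=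
        cap_mul_pow_le hT hH v
    _ ≤ #(subtree v) * (2 * Q ^ (d - depth v)) :=
        Nat.mul_le_mul_left _ (succ_pow_le_two_mul_pow hk)
    _ = 2 * #(subtree v) * Q ^ (d - depth v) := by ring

end Capacity

section Placement

variable (Q : ℕ) {X : Type*} [PartialOrder X] [Fintype X]

/-- Siblings are laid out consecutively in order of decreasing grain, so that every block
starts at a multiple of its own grain. -/
noncomputable def siblingKey (v : X) : ℕᵒᵈ ×ₗ Fin (Fintype.card X) :=
  toLex (OrderDual.toDual (grain Q v), Fintype.equivFin X v)

noncomputable def earlierSiblings (v : X) : Finset X :=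
  {w ∈ siblings v | siblingKey Q w < siblingKey Q v}

noncomputable def offset (v : X) : ℕ := ∑ w ∈ earlierSiblings Q v, cap Q w

noncomputable def start (v : X) : ℕ := offset Q v + ∑ w ∈ ancestors v, offset Q w

lemma siblingKey_injective : Function.Injective (siblingKey Q : X → _) := fun _ _ h =>
  (Fintype.equivFin X).injective (Prod.ext_iff.1 (toLex.injective h)).2

lemma grain_le_of_siblingKey_lt {u v : X} (h : siblingKey Q u < siblingKey Q v) :
    grain Q v ≤ grain Q u := by
  rcases Prod.Lex.toLex_lt_toLex.1 h with h | ⟨h, -⟩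
  exacts [(OrderDual.toDual_lt_toDual.1 h).le, (OrderDual.toDual_inj.1 h).ge]

lemma offset_add_cap_le_sum {v : X} {s : Finset X} (h : insert v (earlierSiblings Q v) ⊆ s) :
    offset Q v + cap Q v ≤ ∑ w ∈ s, cap Q w := by
  have hv : v ∉ earlierSiblings Q v := by simp [earlierSiblings]
  rw [offset, add_comm, ← sum_insert hv]
  exact sum_le_sum_of_subset h

lemma start_add_cap_le_of_siblingKey_lt {u v : X} (hsib : u ∈ siblings v)
    (h : siblingKey Q u < siblingKey Q v) : start Q u + cap Q u ≤ start Q v := by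
  have hle : offset Q u + cap Q u ≤ offset Q v := by
    refine offset_add_cap_le_sum Q (insert_subset ?_ fun w hw => ?_)
    · simp_all [earlierSiblings]
    · simp only [earlierSiblings, mem_filter, mem_siblings] at hw hsib ⊢
      exact ⟨hw.1.trans hsib, hw.2.trans h⟩
  rw [start, start, (mem_siblings.1 hsib)]
  omega

lemma pow_grain_dvd_offset {u v : X} (h : grain Q u ≤ grain Q v) : 2 ^ grain Q u ∣ offset Q v :=
  dvd_sum fun w hw => (pow_dvd_pow 2 (h.trans (grain_le_of_siblingKey_lt Q
    (mem_filter.1 hw).2))).trans (pow_grain_dvd_cap Q w)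

lemma pow_grain_dvd_start (v : X) : 2 ^ grain Q v ∣ start Q v :=
  dvd_add (pow_grain_dvd_offset Q le_rfl) <| dvd_sum fun _ hw =>
    pow_grain_dvd_offset Q (grain_mono Q (mem_ancestors.1 hw).le)

lemma start_disjoint_of_mem_siblings {u u' : X} (hsib : u' ∈ siblings u) (hne : u ≠ u') :
    start Q u + cap Q u ≤ start Q u' ∨ start Q u' + cap Q u' ≤ start Q u := by
  rcases lt_trichotomy (siblingKey Q u) (siblingKey Q u') with h | h | h
  · exact .inl (start_add_cap_le_of_siblingKey_lt Q (mem_siblings.2 (mem_siblings.1 hsib).symm) h)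
  · exact absurd (siblingKey_injective Q h) hne
  · exact .inr (start_add_cap_le_of_siblingKey_lt Q hsib h)

variable {Q} (hT : IsTreeOrder X)
include hT

lemma start_of_covBy {u v : X} (h : u ⋖ v) : start Q u = start Q v + offset Q u := by
  rw [start, ancestors_of_covBy hT h, sum_insert (by simp), start]
  ring

lemma start_le_and_add_cap_lt_of_covBy {u v : X} (h : u ⋖ v) :
    start Q v ≤ start Q u ∧ start Q u + cap Q u < start Q v + cap Q v := by
  have hsum : offset Q u + cap Q u ≤ ∑ w ∈ children v, cap Q w :=
    offset_add_cap_le_sum Q <| insert_subset (mem_children.2 h) <|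
      siblings_of_covBy hT h ▸ filter_subset _ _
  have := demand_le_cap Q v
  rw [demand] at this
  rw [start_of_covBy hT h]
  omega

lemma start_disjoint_of_depth_eq {u u' : X} (hd : depth u = depth u') (hne : u ≠ u') :
    start Q u + cap Q u ≤ start Q u' ∨ start Q u' + cap Q u' ≤ start Q u := by
  induction hk : depth u generalizing u u' with
  | zero =>
    refine start_disjoint_of_mem_siblings Q (mem_siblings.2 ?_) hne
    rw [depth_eq_zero_iff.1 hk, depth_eq_zero_iff.1 (by omega : depth u' = 0)]
  | succ k ih =>
    by_cases hsib : ancestors u' = ancestors u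
    · exact start_disjoint_of_mem_siblings Q (mem_siblings.2 hsib) hne
    obtain ⟨p, hp⟩ := exists_covBy_of_depth_ne_zero (u := u) (by omega)
    obtain ⟨p', hp'⟩ := exists_covBy_of_depth_ne_zero (u := u') (by omega)
    have hpp' : p ≠ p' := by
      rintro rfl
      exact hsib (by rw [ancestors_of_covBy hT hp, ancestors_of_covBy hT hp'])
    have := depth_of_covBy hT hp
    have := depth_of_covBy hT hp'
    have := start_le_and_add_cap_lt_of_covBy (Q := Q) hT hp
    have := start_le_and_add_cap_lt_of_covBy (Q := Q) hT hp'
    have := ih (by omega) hpp' (by omega)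
    omega

lemma eq_of_depth_eq_of_start_eq {u u' : X} (hd : depth u = depth u')
    (hs : start Q u = start Q u') : u = u' := by
  by_contra hne
  have := start_disjoint_of_depth_eq (Q := Q) hT hd hne
  have := cap_pos Q u
  have := cap_pos Q u'
  omega

lemma covBy_iff_depth_and_start {u v : X} : u ⋖ v ↔
    depth u = depth v + 1 ∧ start Q v ≤ start Q u ∧ start Q u < start Q v + cap Q v := by
  refine ⟨fun h => ?_, fun ⟨hd, hs⟩ => ?_⟩
  · have := start_le_and_add_cap_lt_of_covBy (Q := Q) hT h
    exact ⟨depth_of_covBy hT h, this.1, by omega⟩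
  obtain ⟨p, hp⟩ := exists_covBy_of_depth_ne_zero (u := u) (by omega)
  obtain rfl | hpv := eq_or_ne p v
  · exact hp
  have := start_le_and_add_cap_lt_of_covBy (Q := Q) hT hp
  have := start_disjoint_of_depth_eq (Q := Q) hT (by rw [depth_of_covBy hT hp] at hd; omega) hpv
  omega

variable {d : ℕ} (hH : HeightLE X d)
include hH

lemma start_add_cap_le_two_mul_card (hQ : 2 * d ≤ Q) (v : X) :
    start Q v + cap Q v ≤ 2 * Fintype.card X := by
  let := Fintype.toLocallyFiniteOrder (α := X)
  have hmono : Monotone fun v : X => start Q v + cap Q v := (monotone_iff_forall_covBy _).2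
    fun u v h => (start_le_and_add_cap_lt_of_covBy hT h).2.le
  obtain ⟨r, hvr, hr⟩ := exists_le_maximal univ (mem_univ v)
  have hroot : ancestors r = ∅ := eq_empty_of_forall_notMem fun w hw =>
    (mem_ancestors.1 hw).not_ge (hr.2 (mem_univ w) (mem_ancestors.1 hw).le)
  calc start Q v + cap Q v ≤ offset Q r + cap Q r := by simpa [start, hroot] using hmono hvr
    _ ≤ ∑ w ∈ siblings r, cap Q w :=
        offset_add_cap_le_sum Q (insert_subset (by simp) (filter_subset _ _))
    _ ≤ ∑ w ∈ siblings r, 2 * #(subtree w) :=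
        sum_le_sum fun w _ => cap_le_two_mul_card_subtree hT hH hQ w
    _ ≤ 2 * Fintype.card X := by
        rw [← mul_sum, ← card_univ]
        exact Nat.mul_le_mul_left 2
          (sum_card_subtree_le hT (isAntichain_siblings r) fun _ _ => subset_univ _)

end Placement

section Labels

/-- The label `(2 ^ t * (2 * j + 1), m, δ)` stands for the block `[j * 2 ^ t, (j + m) * 2 ^ t)`
at depth `δ`. -/
abbrev Label (n Q d : ℕ) : Type := Fin (4 * n) × Fin (2 * Q + 1) × Fin d

def IsParentLabel {n Q d : ℕ} (x y : Label n Q d) : Prop :=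
  (y.2.2 : ℕ) = x.2.2 + 1 ∧ ∃ t j t' j' : ℕ,
    (x.1 : ℕ) = 2 ^ t * (2 * j + 1) ∧ (y.1 : ℕ) = 2 ^ t' * (2 * j' + 1) ∧
    j * 2 ^ t ≤ j' * 2 ^ t' ∧ j' * 2 ^ t' < (j + x.2.1) * 2 ^ t

variable (Q : ℕ) {X : Type*} [PartialOrder X] [Fintype X]

noncomputable def blockCode (v : X) : ℕ := 2 ^ grain Q v * (2 * (start Q v / 2 ^ grain Q v) + 1)

noncomputable def mantissa (v : X) : ℕ := cap Q v / 2 ^ grain Q v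

lemma div_pow_grain_mul_eq_start (v : X) : start Q v / 2 ^ grain Q v * 2 ^ grain Q v = start Q v :=
  Nat.div_mul_cancel (pow_grain_dvd_start Q v)

lemma mantissa_mul (v : X) : mantissa Q v * 2 ^ grain Q v = cap Q v :=
  Nat.div_mul_cancel (pow_grain_dvd_cap Q v)

lemma blockCode_eq (v : X) : blockCode Q v = 2 * start Q v + 2 ^ grain Q v := by
  rw [blockCode, mul_add, mul_one, mul_left_comm, mul_comm _ (start Q v / _),
    div_pow_grain_mul_eq_start]

lemma mantissa_lt (hQ : 0 < Q) (v : X) : mantissa Q v < 2 * Q + 1 :=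
  (Nat.div_lt_iff_lt_mul (Nat.two_pow_pos _)).2 (cap_lt_mul_pow_grain Q hQ v)

lemma start_of_blockCode_eq {v : X} {t j : ℕ} (h : blockCode Q v = 2 ^ t * (2 * j + 1)) :
    t = grain Q v ∧ j * 2 ^ t = start Q v := by
  obtain ⟨rfl, rfl⟩ := eq_of_two_pow_mul_odd_eq h.symm
  exact ⟨rfl, div_pow_grain_mul_eq_start Q v⟩

theorem exists_injective_label {n d : ℕ} (hT : IsTreeOrder X) (hn : Fintype.card X ≤ n)
    (hH : HeightLE X d) (hQ : 2 * d ≤ Q) : ∃ L : X → Label n Q d,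
      Function.Injective L ∧ ∀ u v, u ⋖ v ↔ IsParentLabel (L v) (L u) := by
  have hcode (v : X) : blockCode Q v < 4 * n := by
    have := start_add_cap_le_two_mul_card hT hH hQ v
    have := Nat.le_of_dvd (cap_pos Q v) (pow_grain_dvd_cap Q v)
    have := cap_pos Q v
    rw [blockCode_eq]
    omega
  have hmant (v : X) : mantissa Q v < 2 * Q + 1 :=
    mantissa_lt Q (by have := depth_lt hT hH v; omega) v
  refine ⟨fun v => (⟨blockCode Q v, hcode v⟩, ⟨mantissa Q v, hmant v⟩,
    ⟨depth v, depth_lt hT hH v⟩), fun u u' h => ?_, fun u v => ?_⟩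
  · simp only [Prod.mk.injEq, Fin.mk.injEq] at h
    refine eq_of_depth_eq_of_start_eq (Q := Q) hT h.2.2 ?_
    rw [← (start_of_blockCode_eq Q h.1.symm).2, div_pow_grain_mul_eq_start]
  rw [covBy_iff_depth_and_start hT, IsParentLabel]
  dsimp only
  refine and_congr_right fun _ => ⟨fun h => ⟨grain Q v, start Q v / 2 ^ grain Q v, grain Q u,
    start Q u / 2 ^ grain Q u, rfl, rfl, ?_⟩, fun ⟨t, j, t', j', hv, hu, h⟩ => ?_⟩
  · rwa [add_mul, mantissa_mul, div_pow_grain_mul_eq_start, div_pow_grain_mul_eq_start]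
  · obtain ⟨rfl, hj⟩ := start_of_blockCode_eq Q hv
    obtain ⟨rfl, hj'⟩ := start_of_blockCode_eq Q hu
    rwa [add_mul, mantissa_mul, hj, hj'] at h

end Labels

end ForestLabel

/-- A parenthood (adjacency) labeling scheme for rooted forests with at most
`n` nodes and depth at most `d`, with labels drawn from a set of size
`O(n·d³)`, i.e. labels of `log₂ n + 3 log₂ d + O(1)` bits.  Here `u ⋖ v`
means that `v` covers `u`, i.e. `v` is the parent of `u`. -/
theorem parenthood_scheme_bounded_depth :
    ∃ C : ℕ, ∀ n d : ℕ, 2 ≤ n → 2 ≤ d →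
      ∃ (N : ℕ) (D : Fin N → Fin N → Prop),
        N ≤ C * n * d ^ 3 ∧
        ∀ (X : Type) [Fintype X] [PartialOrder X],
          IsTreeOrder X → Fintype.card X ≤ n → HeightLE X d →
          ∃ L : X → Fin N,
            Function.Injective L ∧
            (∀ u v : X, u ⋖ v ↔ D (L v) (L u)) := by
  refine ⟨20, fun n d _ hd => ?_⟩
  let e := Fintype.equivFin (ForestLabel.Label n (2 * d) d)
  refine ⟨_, fun x y => ForestLabel.IsParentLabel (e.symm x) (e.symm y), ?_,
    fun X _ _ hT hn hH => ?_⟩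
  · calc Fintype.card (ForestLabel.Label n (2 * d) d) = 4 * n * (4 * d ^ 2 + d) := by
          simp only [Fintype.card_prod, Fintype.card_fin]; ring
      _ ≤ 4 * n * (4 * d ^ 3 + d ^ 3) := by
          gcongr 4 * n * (4 * ?_ + ?_)
          exacts [Nat.pow_le_pow_right (by omega) (by norm_num), Nat.le_self_pow three_ne_zero d]
      _ = 20 * n * d ^ 3 := by ring
  obtain ⟨L, hinj, hL⟩ := ForestLabel.exists_injective_label (2 * d) hT hn hH le_rfl
  exact ⟨e ∘ L, e.injective.comp hinj, fun u v => by simpa using hL u v⟩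
end

section
/- There exist a constant C and a single decoder relation D : ℕ → ℕ → Bool with the following property: for every finite tree order (X, ≤) with n ≥ 2 elements and height d ≥ 2, there is an injective labeling L : X → ℕ such that L(x) ≤ C · n · d³ · (log₂ d)² for every x ∈ X, and for all u, v ∈ X, v covers u (i.e., v is the parent of u) if and only if D(L(v), L(u)) = true. (Equivalently: a parenthood-labeling scheme for the family of all rooted forests in which any node of an n-node forest of depth at most d gets a label of log₂ n + 3 log₂ d + 2 log₂ log₂ d + O(1) bits.) -/
namespace ParenthoodLabeling

lemma padicValNat_two_pow_mul_odd (j q : ℕ) : padicValNat 2 (2 ^ j * (2 * q + 1)) = j := by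
  rw [padicValNat.mul (by positivity) (by omega), padicValNat.prime_pow,
    padicValNat.eq_zero_of_not_dvd (by omega), add_zero]

lemma exists_padicValNat_two_eq (T j : ℕ) :
    ∃ a, T ≤ a ∧ a < T + 2 ^ (j + 1) ∧ padicValNat 2 a = j := by
  set q := T / 2 ^ (j + 1)
  have hpos : 0 < 2 ^ j := by positivity
  have hlo : q * 2 ^ (j + 1) ≤ T := Nat.div_mul_le_self T _
  have hhi : T < q * 2 ^ (j + 1) + 2 ^ (j + 1) := Nat.lt_div_mul_add (by positivity)
  rw [pow_succ] at hlo hhi ⊢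
  by_cases h : T ≤ 2 ^ j * (2 * q + 1)
  · exact ⟨_, h, by nlinarith, padicValNat_two_pow_mul_odd j q⟩
  · exact ⟨_, by nlinarith, by nlinarith, padicValNat_two_pow_mul_odd j (q + 1)⟩

lemma exists_round_up (K N : ℕ) (hK : 0 < K) :
    ∃ j m, N ≤ m * 2 ^ j ∧ m ≤ 8 * K ∧ K * (m * 2 ^ j + 2 ^ (j + 1)) ≤ (K + 1) * N + 3 * K := by
  set j := Nat.log 2 (N / (4 * K))
  have hpos : 0 < 2 ^ j := by positivity
  have hdiv : N / 2 ^ j * 2 ^ j ≤ N := Nat.div_mul_le_self N _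
  have hlt : N < N / 2 ^ j * 2 ^ j + 2 ^ j := Nat.lt_div_mul_add hpos
  have hN : N < 8 * K * 2 ^ j := by
    have := Nat.lt_pow_succ_log_self (b := 2) (by norm_num) (N / (4 * K))
    rw [Nat.div_lt_iff_lt_mul (by positivity), pow_succ] at this
    linarith
  have hoverhead : K * 2 ^ j * 3 ≤ N + 3 * K := by
    rcases Nat.eq_zero_or_pos (N / (4 * K)) with h0 | h0
    · simp only [j, h0, Nat.log_zero_right, pow_zero]; omega
    · have := Nat.pow_log_le_self 2 h0.ne'
      rw [Nat.le_div_iff_mul_le (by positivity)] at this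
      linarith
  refine ⟨j, N / 2 ^ j + 1, by linarith, ?_, ?_⟩
  · have : N / 2 ^ j < 8 * K := (Nat.div_lt_iff_lt_mul hpos).2 hN
    omega
  · rw [pow_succ]; nlinarith

lemma space_bound_step {K k nD nR WD WR A : ℕ} (hKk : 2 * k ≤ K)
    (hA : K * A ≤ (K + 1) * (WD + 1) + 3 * K)
    (hD : K * WD ≤ 5 * nD * (K + 2 * k)) (hR : K * WR ≤ 5 * nR * (K + 2 * (k + 1))) :
    K * (A + WR) ≤ 5 * (nD + 1 + nR) * (K + 2 * (k + 1)) := by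
  rcases Nat.eq_zero_or_pos K with rfl | hK
  · omega
  have hroot : K * A ≤ 5 * (nD + 1) * (K + 2 * (k + 1)) := by
    refine Nat.le_of_mul_le_mul_left ?_ hK
    have hD' : (K + 1) * (K * WD) ≤ (K + 1) * (5 * nD * (K + 2 * k)) := Nat.mul_le_mul_left _ hD
    have hinfl : (K + 1) * (K + 2 * k) ≤ K * (K + 2 * (k + 1)) := by nlinarith
    have hinflD : nD * ((K + 1) * (K + 2 * k)) ≤ nD * (K * (K + 2 * (k + 1))) :=
      Nat.mul_le_mul_left _ hinfl
    nlinarith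
  nlinarith

lemma exists_two_pow_mem_Ioc {d : ℕ} (hd : d ≠ 0) : ∃ b, d < 2 ^ b ∧ 2 ^ b ≤ 2 * d :=
  ⟨Nat.log 2 d + 1, Nat.lt_pow_succ_log_self one_lt_two d,
    by rw [pow_succ, mul_comm]; exact Nat.mul_le_mul_left 2 (Nat.pow_log_le_self 2 hd)⟩

lemma mul_add_div_of_lt {q B r : ℕ} (h : r < B) : (q * B + r) / B = q := by
  rw [add_comm, Nat.add_mul_div_right _ _ (by omega), Nat.div_eq_of_lt h, zero_add]

def blockEnd (a m : ℕ) : ℕ := a + m * 2 ^ padicValNat 2 a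

def encodeLabel (b a l m : ℕ) : ℕ := 2 ^ b * (2 * ((a * 2 ^ b + l) * 2 ^ (b + 5) + m) + 1)

def labelCode (y : ℕ) : ℕ := y / 2 ^ padicValNat 2 y / 2

def labelPos (y : ℕ) : ℕ := labelCode y / 2 ^ (padicValNat 2 y + 5) / 2 ^ padicValNat 2 y

def labelDepth (y : ℕ) : ℕ := labelCode y / 2 ^ (padicValNat 2 y + 5) % 2 ^ padicValNat 2 y

def labelMantissa (y : ℕ) : ℕ := labelCode y % 2 ^ (padicValNat 2 y + 5)

def parentDecoder (y₁ y₂ : ℕ) : Bool :=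
  labelDepth y₂ = labelDepth y₁ + 1 ∧ labelPos y₁ ≤ labelPos y₂ ∧
    labelPos y₂ < blockEnd (labelPos y₁) (labelMantissa y₁)

section Encoding

variable {b a l m : ℕ}

lemma padicValNat_encodeLabel : padicValNat 2 (encodeLabel b a l m) = b :=
  padicValNat_two_pow_mul_odd _ _

lemma labelCode_encodeLabel :
    labelCode (encodeLabel b a l m) = (a * 2 ^ b + l) * 2 ^ (b + 5) + m := by
  rw [labelCode, padicValNat_encodeLabel, encodeLabel, Nat.mul_div_cancel_left _ (by positivity)]
  omega

variable (hl : l < 2 ^ b) (hm : m < 2 ^ (b + 5))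
include hl hm

lemma labelPos_encodeLabel : labelPos (encodeLabel b a l m) = a := by
  rw [labelPos, labelCode_encodeLabel, padicValNat_encodeLabel, mul_add_div_of_lt hm,
    mul_add_div_of_lt hl]

lemma labelDepth_encodeLabel : labelDepth (encodeLabel b a l m) = l := by
  rw [labelDepth, labelCode_encodeLabel, padicValNat_encodeLabel, mul_add_div_of_lt hm,
    Nat.mul_add_mod_of_lt hl]

omit hl in
lemma labelMantissa_encodeLabel : labelMantissa (encodeLabel b a l m) = m := by
  rw [labelMantissa, labelCode_encodeLabel, padicValNat_encodeLabel, Nat.mul_add_mod_of_lt hm]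

lemma encodeLabel_lt : encodeLabel b a l m < 64 * (a + 1) * (2 ^ b) ^ 3 := by
  rw [encodeLabel]
  set B := 2 ^ b
  have hP : 2 ^ (b + 5) = 32 * B := by rw [pow_add]; ring
  have hB : a * B + l + 1 ≤ (a + 1) * B := by rw [add_one_mul]; omega
  have hcode : (a * B + l) * 2 ^ (b + 5) + m + 1 ≤ (a + 1) * B * 2 ^ (b + 5) :=
    calc (a * B + l) * 2 ^ (b + 5) + m + 1 ≤ (a * B + l + 1) * 2 ^ (b + 5) := by
          rw [add_one_mul]; omega
      _ ≤ (a + 1) * B * 2 ^ (b + 5) := Nat.mul_le_mul_right _ hB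
  rw [hP] at hcode ⊢
  nlinarith

lemma parentDecoder_encodeLabel {a' l' m' : ℕ} (hl' : l' < 2 ^ b) (hm' : m' < 2 ^ (b + 5)) :
    parentDecoder (encodeLabel b a l m) (encodeLabel b a' l' m') = true ↔
      l' = l + 1 ∧ a ≤ a' ∧ a' < blockEnd a m := by
  simp [parentDecoder, labelPos_encodeLabel, labelDepth_encodeLabel, labelMantissa_encodeLabel,
    hl, hm, hl', hm']

end Encoding

lemma encodeLabel_le {n d b a l m : ℕ} (hd : 2 ≤ d) (hbd : 2 ^ b ≤ 2 * d) (ha : a < 10 * n)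
    (hl : l < 2 ^ b) (hm : m < 2 ^ (b + 5)) :
    encodeLabel b a l m ≤ 5120 * n * d ^ 3 * (Nat.log 2 d) ^ 2 := by
  have hlog : 1 ≤ Nat.log 2 d := Nat.le_log_of_pow_le one_lt_two (by omega)
  calc encodeLabel b a l m ≤ 64 * (a + 1) * (2 ^ b) ^ 3 := (encodeLabel_lt hl hm).le
    _ ≤ 64 * (10 * n) * (2 * d) ^ 3 := by gcongr; omega
    _ = 5120 * n * d ^ 3 * 1 := by ring
    _ ≤ 5120 * n * d ^ 3 * (Nat.log 2 d) ^ 2 := by gcongr; nlinarith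

section Depth

variable {X : Type*} [PartialOrder X]

noncomputable def depth (x : X) : ℕ := (Set.Ici x).ncard

lemma Ici_eq_insert_of_covBy (hT : IsTreeOrder X) {u v : X} (h : u ⋖ v) :
    Set.Ici u = insert u (Set.Ici v) := by
  ext y
  simp only [Set.mem_Ici, Set.mem_insert_iff]
  refine ⟨fun hy => ?_, ?_⟩
  · rcases hy.eq_or_lt with rfl | huy
    · exact Or.inl rfl
    · rcases hT u y v hy h.le with hyv | hvy
      · exact Or.inr (le_of_eq (hyv.eq_or_lt.resolve_right (h.2 huy)).symm)
      · exact Or.inr hvy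
  · rintro (rfl | hvy)
    exacts [le_rfl, h.le.trans hvy]

variable [Finite X]

lemma depth_pos (x : X) : 0 < depth x :=
  (Set.ncard_pos).2 ⟨x, Set.self_mem_Ici⟩

lemma depth_lt_depth_of_lt {x y : X} (h : x < y) : depth y < depth x :=
  Set.ncard_lt_ncard (Set.Ici_ssubset_Ici.2 h)

lemma depth_le_of_heightLE (hT : IsTreeOrder X) {d : ℕ} (hH : HeightLE X d) (x : X) :
    depth x ≤ d := by
  have hfin := Set.toFinite (Set.Ici x)
  rw [depth, Set.ncard_eq_toFinset_card _ hfin]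
  refine hH _ fun u hu v hv => ?_
  simp only [Set.Finite.mem_toFinset, Set.mem_Ici] at hu hv
  exact hT x u v hu hv

lemma covBy_iff_le_and_depth_eq (hT : IsTreeOrder X) {u v : X} :
    u ⋖ v ↔ u ≤ v ∧ depth u = depth v + 1 := by
  refine ⟨fun h => ⟨h.le, ?_⟩, fun ⟨hle, hd⟩ => ?_⟩
  · rw [depth, Ici_eq_insert_of_covBy hT h, Set.ncard_insert_of_notMem (s := Set.Ici v) h.lt.not_ge]
    rfl
  · have hlt : u < v := hle.lt_of_ne (by rintro rfl; omega)
    refine ⟨hlt, fun w huw hwv => ?_⟩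
    have := depth_lt_depth_of_lt huw
    have := depth_lt_depth_of_lt hwv
    omega

end Depth

section Placement

variable {X : Type*} [PartialOrder X]

structure IsBlockPlacement (c : ℕ) (S : Finset X) (a m : X → ℕ) (T E : ℕ) : Prop where
  start_le : ∀ x ∈ S, T ≤ a x
  blockEnd_le : ∀ x ∈ S, blockEnd (a x) (m x) ≤ E
  mantissa_lt : ∀ x ∈ S, m x < c
  le_iff : ∀ x ∈ S, ∀ v ∈ S, x ≤ v ↔ a v ≤ a x ∧ a x < blockEnd (a v) (m v)

namespace IsBlockPlacement

variable {c : ℕ} {S : Finset X} {a m : X → ℕ} {T E : ℕ}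

lemma empty (c : ℕ) (a m : X → ℕ) (T E : ℕ) : IsBlockPlacement c ∅ a m T E :=
  ⟨by simp, by simp, by simp, by simp⟩

lemma lt_blockEnd (hP : IsBlockPlacement c S a m T E) {x : X} (hx : x ∈ S) :
    a x < blockEnd (a x) (m x) :=
  ((hP.le_iff x hx x hx).1 le_rfl).2

lemma injOn (hP : IsBlockPlacement c S a m T E) : Set.InjOn a S := by
  intro x hx y hy hxy
  refine le_antisymm ((hP.le_iff x hx y hy).2 ⟨hxy.ge, ?_⟩) ((hP.le_iff y hy x hx).2 ⟨hxy.le, ?_⟩)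
  · rw [hxy]; exact hP.lt_blockEnd hy
  · rw [← hxy]; exact hP.lt_blockEnd hx

lemma mono (hP : IsBlockPlacement c S a m T E) {T' E' : ℕ} (hT : T' ≤ T) (hE : E ≤ E') :
    IsBlockPlacement c S a m T' E' :=
  ⟨fun x hx => hT.trans (hP.start_le x hx), fun x hx => (hP.blockEnd_le x hx).trans hE,
    hP.mantissa_lt, hP.le_iff⟩

lemma union [DecidableEq X] {S₁ S₂ : Finset X} {a₁ m₁ a₂ m₂ : X → ℕ} {E₁ : ℕ}
    (h₁ : IsBlockPlacement c S₁ a₁ m₁ T E₁) (h₂ : IsBlockPlacement c S₂ a₂ m₂ E₁ E)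
    (hTE : T ≤ E₁) (hEE : E₁ ≤ E) (hsep : ∀ x ∈ S₁, ∀ y ∈ S₂, ¬x ≤ y ∧ ¬y ≤ x) :
    IsBlockPlacement c (S₁ ∪ S₂) (S₁.piecewise a₁ a₂) (S₁.piecewise m₁ m₂) T E := by
  have hS₂ : ∀ y ∈ S₂, y ∉ S₁ := fun y hy hy₁ => (hsep y hy₁ y hy).1 le_rfl
  have hsplit : ∀ x ∈ S₁, ∀ y ∈ S₂, blockEnd (a₁ x) (m₁ x) ≤ a₂ y := fun x hx y hy =>
    (h₁.blockEnd_le x hx).trans (h₂.start_le y hy)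
  refine ⟨?_, ?_, ?_, ?_⟩ <;> simp only [Finset.mem_union]
  · rintro x (hx | hx)
    · simpa [hx] using h₁.start_le x hx
    · simpa [hS₂ x hx] using hTE.trans (h₂.start_le x hx)
  · rintro x (hx | hx)
    · simpa [hx] using (h₁.blockEnd_le x hx).trans hEE
    · simpa [hS₂ x hx] using h₂.blockEnd_le x hx
  · rintro x (hx | hx)
    · simpa [hx] using h₁.mantissa_lt x hx
    · simpa [hS₂ x hx] using h₂.mantissa_lt x hx
  · rintro x (hx | hx) v (hv | hv)
    · simpa [hx, hv] using h₁.le_iff x hx v hv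
    · have := hsplit x hx v hv
      have := h₁.lt_blockEnd hx
      simp only [Finset.piecewise_eq_of_mem _ _ _ hx,
        Finset.piecewise_eq_of_notMem _ _ _ (hS₂ v hv), (hsep x hx v hv).1, false_iff]
      omega
    · have := hsplit v hv x hx
      simp only [Finset.piecewise_eq_of_mem _ _ _ hv,
        Finset.piecewise_eq_of_notMem _ _ _ (hS₂ x hx), (hsep v hv x hx).2, false_iff]
      omega
    · simpa [hS₂ x hx, hS₂ v hv] using h₂.le_iff x hx v hv

lemma insert_top [DecidableEq X] {r : X} {a₀ m₀ : ℕ}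
    (hP : IsBlockPlacement c S a m (a₀ + 1) E) (hSr : ∀ x ∈ S, x < r) (hm₀ : m₀ < c)
    (hE : a₀ < E) (hEb : E ≤ blockEnd a₀ m₀) :
    IsBlockPlacement c (insert r S) (Function.update a r a₀) (Function.update m r m₀) a₀
      (blockEnd a₀ m₀) := by
  have hne : ∀ x ∈ S, x ≠ r := fun x hx => (hSr x hx).ne
  have hend : ∀ x ∈ S, blockEnd (a x) (m x) ≤ blockEnd a₀ m₀ := fun x hx =>
    (hP.blockEnd_le x hx).trans hEb
  refine ⟨?_, ?_, ?_, ?_⟩ <;> simp only [Finset.mem_insert]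
  · rintro x (rfl | hx)
    · simp
    · simpa [hne x hx] using (hP.start_le x hx).trans' (Nat.le_succ a₀)
  · rintro x (rfl | hx)
    · simp
    · simpa [hne x hx] using hend x hx
  · rintro x (rfl | hx)
    · simpa using hm₀
    · simpa [hne x hx] using hP.mantissa_lt x hx
  · rintro x (rfl | hx) v (rfl | hv)
    · simp only [Function.update_self, le_refl, true_and, true_iff]
      omega
    · have := hP.start_le v hv
      simp only [Function.update_self, Function.update_of_ne (hne v hv), (hSr v hv).not_ge,
        false_iff]
      omega
    · have := hP.start_le x hx
      have := hP.lt_blockEnd hx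
      have := hend x hx
      simp only [Function.update_self, Function.update_of_ne (hne x hx), (hSr x hx).le,
        true_iff]
      omega
    · simpa [hne x hx, hne v hv] using hP.le_iff x hx v hv

end IsBlockPlacement

end Placement

section Construction

variable {X : Type*} [PartialOrder X]

lemma not_le_and_not_ge_of_maximal (hT : IsTreeOrder X) {S : Finset X} {r x y : X}
    (hr : Maximal (· ∈ S) r) (hx : x ≤ r) (hy : y ∈ S) (hyr : ¬y ≤ r) : ¬x ≤ y ∧ ¬y ≤ x :=
  ⟨fun hxy => (hT x r y hx hxy).elim (fun hry => hyr (hr.2 hy hry)) hyr,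
    fun hyx => hyr (hyx.trans hx)⟩

lemma isLowerSet_sep_not_le (hT : IsTreeOrder X) {S : Finset X}
    (hS : IsLowerSet (S : Set X)) {r : X} (hr : Maximal (· ∈ S) r) :
    IsLowerSet {x ∈ (S : Set X) | ¬x ≤ r} :=
  fun _ _ hyx hx =>
    ⟨hS hyx hx.1, fun hyr => (not_le_and_not_ge_of_maximal hT hr hyr hx.1 hx.2).1 hyx⟩

variable [Finite X]

/-- `k` bounds the number of levels of `S`, and `(K + 2 * k) / K` bounds the inflation
`(1 + 1 / K) ^ k` of the blocks caused by rounding them up (`exists_round_up`). -/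
theorem exists_blockPlacement (hT : IsTreeOrder X) {d K : ℕ} (hd : ∀ x : X, depth x ≤ d)
    (hK : 0 < K) (S : Finset X) (hS : IsLowerSet (S : Set X)) (k : ℕ) (hKk : 2 * k ≤ K + 2)
    (hSk : ∀ x ∈ S, d < depth x + k) :
    ∃ W, K * W ≤ 5 * S.card * (K + 2 * k) ∧
      ∀ T, ∃ a m : X → ℕ, IsBlockPlacement (8 * K + 1) S a m T (T + W) := by
  classical
  induction S using Finset.strongInduction generalizing k with
  | H S ih =>
  rcases S.eq_empty_or_nonempty with rfl | hne
  · exact ⟨0, by simp, fun T => ⟨0, 0, .empty _ _ _ _ _⟩⟩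
  obtain ⟨r, hr⟩ := S.exists_maximal hne
  obtain ⟨k, rfl⟩ : ∃ k', k = k' + 1 :=
    ⟨k - 1, by have := hSk r hr.1; have := hd r; omega⟩
  set D := S.filter (· < r)
  set R := S.filter (¬· ≤ r)
  have hrD : r ∉ D := by simp [D]
  have hDr : insert r D = S.filter (· ≤ r) := by
    ext x
    have := hr.1
    simp only [Finset.mem_insert, Finset.mem_filter, D, le_iff_lt_or_eq]
    grind
  obtain ⟨WD, hWD, hD⟩ := ih D (Finset.filter_ssubset.2 ⟨r, hr.1, lt_irrefl r⟩)
    (by rw [Finset.coe_filter]; exact hS.inter (isLowerSet_Iio r)) k (by omega) fun x hx => by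
      have := depth_lt_depth_of_lt (Finset.mem_filter.1 hx).2
      have := hSk r hr.1
      omega
  obtain ⟨WR, hWR, hR⟩ := ih R (Finset.filter_ssubset.2 ⟨r, hr.1, not_not.2 le_rfl⟩)
    (by rw [Finset.coe_filter]; exact isLowerSet_sep_not_le hT hS hr) (k + 1) hKk
    fun x hx => hSk x (Finset.mem_of_mem_filter x hx)
  obtain ⟨j, m₀, hN, hm₀, hspace⟩ := exists_round_up K (WD + 1) hK
  refine ⟨m₀ * 2 ^ j + 2 ^ (j + 1) + WR, ?_, fun T => ?_⟩
  · have hcard : S.card = D.card + 1 + R.card := by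
      rw [← Finset.card_insert_of_notMem hrD, hDr, Finset.card_filter_add_card_filter_not]
    rw [hcard]
    exact space_bound_step (by omega) hspace hWD hWR
  obtain ⟨a₀, hTa, ha₀, hv⟩ := exists_padicValNat_two_eq T j
  have hbe : blockEnd a₀ m₀ = a₀ + m₀ * 2 ^ j := by rw [blockEnd, hv]
  obtain ⟨aD, mD, hPD⟩ := hD (a₀ + 1)
  obtain ⟨aR, mR, hPR⟩ := hR (T + (m₀ * 2 ^ j + 2 ^ (j + 1)))
  have hPA := (hPD.insert_top (fun x hx => (Finset.mem_filter.1 hx).2) (by omega) (by omega)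
    (by omega)).mono hTa (show blockEnd a₀ m₀ ≤ T + (m₀ * 2 ^ j + 2 ^ (j + 1)) by omega)
  rw [hDr] at hPA
  have hPS := hPA.union hPR (by omega) (by omega) fun x hx y hy =>
    not_le_and_not_ge_of_maximal hT hr (Finset.mem_filter.1 hx).2 (Finset.mem_filter.1 hy).1
      (Finset.mem_filter.1 hy).2
  rw [Finset.filter_union_filter_not_eq, add_assoc] at hPS
  exact ⟨_, _, hPS⟩

end Construction

theorem exists_blockPlacement_univ {X : Type*} [PartialOrder X] [Fintype X]
    (hT : IsTreeOrder X) {d K : ℕ} (hd : ∀ x : X, depth x ≤ d) (hK : 0 < K) (hdK : 2 * d ≤ K) :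
    ∃ a m : X → ℕ, IsBlockPlacement (8 * K + 1) Finset.univ a m 0 (10 * Fintype.card X) := by
  obtain ⟨W, hW, hP⟩ := exists_blockPlacement hT hd hK Finset.univ
    (by simpa using isLowerSet_univ) d (by omega) fun x _ => by have := depth_pos x; omega
  have hW' : W ≤ 10 * Fintype.card X := by
    refine Nat.le_of_mul_le_mul_left ?_ hK
    rw [Finset.card_univ] at hW
    nlinarith
  obtain ⟨a, m, hP⟩ := hP 0
  exact ⟨a, m, hP.mono le_rfl (by omega)⟩

end ParenthoodLabeling

open ParenthoodLabeling

/-- A single decoder `D` gives a parenthood-labeling scheme for the family of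
all rooted forests: any node of an `n`-node forest (`n ≥ 2`) of depth at most
`d` (`d ≥ 2`) gets a label bounded by `C · n · d³ · (log₂ d)²`, i.e. of
`log₂ n + 3 log₂ d + 2 log₂ log₂ d + O(1)` bits.  Here `u ⋖ v` means that `v`
covers `u`, i.e. `v` is the parent of `u`. -/
theorem parenthood_scheme_universal :
    ∃ (C : ℕ) (D : ℕ → ℕ → Bool),
      ∀ (X : Type) [Fintype X] [PartialOrder X], ∀ d : ℕ,
        IsTreeOrder X → 2 ≤ Fintype.card X → 2 ≤ d → HeightLE X d →
        ∃ L : X → ℕ,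
          Function.Injective L ∧
          (∀ x : X, L x ≤ C * Fintype.card X * d ^ 3 * (Nat.log 2 d) ^ 2) ∧
          (∀ u v : X, u ⋖ v ↔ D (L v) (L u) = true) := by
  refine ⟨5120, parentDecoder, fun X _ _ d hT _ hd hH => ?_⟩
  obtain ⟨b, hdb, hbd⟩ := exists_two_pow_mem_Ioc (show d ≠ 0 by omega)
  have hdepth : ∀ x : X, depth x < 2 ^ b := fun x => (depth_le_of_heightLE hT hH x).trans_lt hdb
  obtain ⟨a, m, hP⟩ := exists_blockPlacement_univ hT (depth_le_of_heightLE hT hH)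
    (K := 2 * 2 ^ b) (by positivity) (by omega)
  have hm : ∀ x, m x < 2 ^ (b + 5) := fun x => by
    have := hP.mantissa_lt x (Finset.mem_univ x)
    have : 2 ^ (b + 5) = 32 * 2 ^ b := by ring
    omega
  refine ⟨fun x => encodeLabel b (a x) (depth x) (m x), fun x y hxy => ?_, fun x => ?_,
    fun u v => ?_⟩
  · refine hP.injOn (Finset.mem_univ x) (Finset.mem_univ y) ?_
    simpa [labelPos_encodeLabel (hdepth _) (hm _)] using congrArg labelPos hxy
  · exact encodeLabel_le hd hbd ((hP.lt_blockEnd (Finset.mem_univ x)).trans_le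
      (hP.blockEnd_le x (Finset.mem_univ x))) (hdepth x) (hm x)
  · rw [parentDecoder_encodeLabel (hdepth v) (hm v) (hdepth u) (hm u),
      covBy_iff_le_and_depth_eq hT, hP.le_iff u (Finset.mem_univ u) v (Finset.mem_univ v)]
    tauto
end

section
/- Let U be a finite poset that is universal for the family of all tree orders with at most n elements, i.e., every tree order with at most n elements embeds into U as an induced suborder. Then for every integer k ≥ 1, the k-fold product poset U^k (ordered componentwise: (u₁,…,u_k) ≤ (v₁,…,v_k) iff u_i ≤ v_i for all i) is universal for the family of all posets with at most n elements and tree-dimension at most k; in particular there is a universal poset of size |U|^k for this family. -/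
/-- A relation is a *tree order relation* if it is a partial order in which
any two incomparable elements have no common upper bound. -/
def IsTreeOrderRel (X : Type*) (r : X → X → Prop) : Prop :=
  IsPartialOrder X r ∧ ∀ x y z : X, r x y → r x z → (r y z ∨ r z y)

/-- A poset has tree-dimension at most `k` if its order is the intersection
of `k` tree orders on the same ground set (each of which then extends the
order). -/
def TreeDimLE (X : Type*) [PartialOrder X] (k : ℕ) : Prop :=
  ∃ r : Fin k → X → X → Prop,
    (∀ i, IsTreeOrderRel X (r i)) ∧
    (∀ x y : X, x ≤ y ↔ ∀ i, r i x y)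

/-- `P` embeds into `U` as an induced suborder. -/
def EmbedsIn (P U : Type*) [PartialOrder P] [PartialOrder U] : Prop :=
  ∃ f : P → U, Function.Injective f ∧ ∀ a b : P, a ≤ b ↔ f a ≤ f b

/-!
Each of the `k` tree orders witnessing the tree-dimension of `P` embeds in `U`; taking these
embeddings as coordinates gives a map `P → U^k` that reflects the order, because the order of `P`
is the intersection of the tree orders, and an order-reflecting map is injective.
-/

abbrev IsPartialOrder.toPartialOrder {X : Type*} {r : X → X → Prop} (h : IsPartialOrder X r) :
    PartialOrder X where
  le := r
  le_refl := h.refl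
  le_trans := h.trans
  le_antisymm := h.antisymm

theorem OrderEmbedding.embedsIn {P U : Type*} [PartialOrder P] [PartialOrder U] (f : P ↪o U) :
    EmbedsIn P U :=
  ⟨f, f.injective, fun _ _ => f.le_iff_le.symm⟩

theorem IsTreeOrderRel.exists_map_le_iff {n : ℕ} {U : Type*} [PartialOrder U]
    (hU : ∀ (X : Type) [Fintype X] [PartialOrder X],
      IsTreeOrder X → Fintype.card X ≤ n → EmbedsIn X U)
    {P : Type} [Fintype P] {r : P → P → Prop} (hr : IsTreeOrderRel P r)
    (hP : Fintype.card P ≤ n) :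
    ∃ f : P → U, ∀ a b, r a b ↔ f a ≤ f b := by
  let := hr.1.toPartialOrder
  obtain ⟨f, -, hf⟩ := hU P hr.2 hP
  exact ⟨f, hf⟩

theorem universal_poset_power_general (n k : ℕ)
    (U : Type) [PartialOrder U]
    (hU : ∀ (X : Type) [Fintype X] [PartialOrder X],
      IsTreeOrder X → Fintype.card X ≤ n → EmbedsIn X U) :
    ∀ (P : Type) [Fintype P] [PartialOrder P],
      Fintype.card P ≤ n → TreeDimLE P k → EmbedsIn P (Fin k → U) := by
  intro P _ _ hcard ⟨r, hr, hle⟩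
  choose f hf using fun i => (hr i).exists_map_le_iff hU hcard
  refine (OrderEmbedding.ofMapLEIff (fun p i => f i p) fun a b => ?_).embedsIn
  simp only [Pi.le_def, hle, hf]

/-- If the finite poset `U` is universal for tree orders with at most `n`
elements, then the componentwise-ordered power `U^k` is universal for posets
with at most `n` elements and tree-dimension at most `k`. -/
theorem universal_poset_power (n k : ℕ) (hk : 1 ≤ k)
    (U : Type) [Fintype U] [PartialOrder U]
    (hU : ∀ (X : Type) [Fintype X] [PartialOrder X],
      IsTreeOrder X → Fintype.card X ≤ n → EmbedsIn X U) :
    ∀ (P : Type) [Fintype P] [PartialOrder P],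
      Fintype.card P ≤ n → TreeDimLE P k → EmbedsIn P (Fin k → U) :=
  universal_poset_power_general n k U hU
end

section
/- If a finite poset (X, ≤) with n elements has tree-dimension at most k, then it has order dimension at most 2k; consequently, (X, ≤) embeds as an induced suborder into the componentwise-ordered product (Fin n)^(2k), and the smallest size of a universal poset for the family of n-element posets with tree-dimension at most k is at most n^(2k). -/
/-- A poset has (order) dimension at most `m` if its order is the
intersection of `m` linear orders on the same ground set. -/
def OrderDimLE (X : Type*) [PartialOrder X] (m : ℕ) : Prop :=
  ∃ r : Fin m → X → X → Prop,
    (∀ i, IsLinearOrder X (r i)) ∧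
    (∀ x y : X, x ≤ y ↔ ∀ i, r i x y)

/-!
For a tree order `r` (upper sets are chains) and an injective labelling `e` of the points by a
linear order, record for each `x` its ancestors indexed by depth, from a root down to `x`, padded
with `⊤` below `x`. Comparing these sequences lexicographically is a linear extension of `r`
(a post-order traversal of the forest): the padding puts `x` after its descendants, and two
incomparable points are compared by the labels of the two distinct ancestors at which their
chains first diverge. Reversing the labels reverses exactly these comparisons, so the two
extensions obtained from `e` and from its dual intersect to `r`. Applied to each of `k` tree
orders this gives `2k` linear orders; ranking the points in each of them embeds the poset into
`(Fin n)^(2k)`.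
-/

open Finset Function

section RelRank

variable {X : Type*} [Fintype X] {R : X → X → Prop} {x y z : X}

open Classical in
noncomputable def strictLowers (R : X → X → Prop) (x : X) : Finset X := {z | R z x ∧ z ≠ x}

noncomputable def relRank (R : X → X → Prop) (x : X) : ℕ := #(strictLowers R x)

lemma mem_strictLowers : z ∈ strictLowers R x ↔ R z x ∧ z ≠ x := by
  simp [strictLowers]

lemma relRank_lt_card (R : X → X → Prop) (x : X) : relRank R x < Fintype.card X :=
  card_lt_univ_of_notMem (x := x) fun hx => (mem_strictLowers.1 hx).2 rfl

variable [IsTrans X R] [Std.Antisymm R]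

lemma strictLowers_subset (h : R x y) : strictLowers R x ⊆ strictLowers R y := by
  intro z hz
  rw [mem_strictLowers] at hz ⊢
  refine ⟨_root_.trans hz.1 h, ?_⟩
  rintro rfl
  exact hz.2 (antisymm h hz.1).symm

lemma relRank_le_relRank (h : R x y) : relRank R x ≤ relRank R y :=
  card_le_card (strictLowers_subset h)

lemma relRank_lt_relRank (h : R x y) (hne : x ≠ y) : relRank R x < relRank R y :=
  card_lt_card <| (ssubset_iff_of_subset (strictLowers_subset h)).2
    ⟨x, mem_strictLowers.2 ⟨h, hne⟩, fun hx => (mem_strictLowers.1 hx).2 rfl⟩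

end RelRank

lemma relRank_le_relRank_iff {X : Type*} [Fintype X] {R : X → X → Prop} [hR : IsLinearOrder X R]
    {x y : X} : relRank R x ≤ relRank R y ↔ R x y := by
  refine ⟨fun hle => ?_, relRank_le_relRank⟩
  by_contra hxy
  have hyx : R y x := (total_of R x y).resolve_left hxy
  have hne : y ≠ x := by rintro rfl; exact hxy (refl y)
  exact (relRank_lt_relRank hyx hne).not_ge hle

section TreeOrder

variable {X : Type*} [Fintype X] {r : X → X → Prop} {x y z : X} {i : ℕ}

noncomputable def depth (r : X → X → Prop) (x : X) : ℕ := relRank (swap r) x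

variable (hr : IsTreeOrderRel X r)
include hr

lemma depth_le_depth (h : r x y) : depth r y ≤ depth r x := by
  have := hr.1
  exact relRank_le_relRank (R := swap r) h

lemma eq_of_depth_eq (hy : r x y) (hz : r x z) (h : depth r y = depth r z) : y = z := by
  have := hr.1
  by_contra hne
  rcases hr.2 x y z hy hz with hyz | hzy
  · exact (relRank_lt_relRank (R := swap r) hyz (Ne.symm hne)).ne h.symm
  · exact (relRank_lt_relRank (R := swap r) hzy hne).ne h

lemma exists_rel_depth_eq (hi : i ≤ depth r x) : ∃ z, r x z ∧ depth r z = i := by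
  classical
  have := hr.1
  have hcard : #({z | r x z} : Finset X) = depth r x + 1 := by
    rw [← card_erase_add_one (a := x) (by simpa using refl_of r x)]
    congr 2
    ext z
    simp [mem_strictLowers, and_comm]
  obtain ⟨z, hz, hzi⟩ := surjOn_of_injOn_of_card_le (depth r) (s := {z | r x z})
    (t := range (depth r x + 1))
    (fun z hz => by simpa [Nat.lt_succ_iff] using depth_le_depth hr (by simpa using hz))
    (fun y hy z hz => eq_of_depth_eq hr (by simpa using hy) (by simpa using hz))
    (by simp [hcard]) (by simpa [Nat.lt_succ_iff] using hi : i ∈ range (depth r x + 1))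
  exact ⟨z, by simpa using hz, hzi⟩

end TreeOrder

lemma isLinearOrder_invImage {X β : Type*} [LinearOrder β] {f : X → β} (hf : Injective f) :
    IsLinearOrder X (InvImage (· ≤ ·) f) where
  refl x := le_refl (f x)
  trans _ _ _ := le_trans
  antisymm _ _ h h' := hf (le_antisymm h h')
  total x y := le_total (f x) (f y)

section TreeKey

variable {X : Type*} [Fintype X] {r : X → X → Prop} {x y z : X} {i : ℕ}

open Classical in
noncomputable def ancestorAt (r : X → X → Prop) (x : X) (i : ℕ) : WithTop X :=
  if h : ∃ z, r x z ∧ depth r z = i then h.choose else ⊤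

lemma ancestorAt_eq_coe_iff (hr : IsTreeOrderRel X r) :
    ancestorAt r x i = z ↔ r x z ∧ depth r z = i := by
  unfold ancestorAt
  split_ifs with h
  · refine ⟨fun hz => WithTop.coe_injective hz ▸ h.choose_spec, fun hz => ?_⟩
    exact congrArg _ (eq_of_depth_eq hr h.choose_spec.1 hz.1 (h.choose_spec.2.trans hz.2.symm))
  · exact ⟨fun hz => (WithTop.top_ne_coe hz).elim, fun hz => (h ⟨z, hz⟩).elim⟩

lemma ancestorAt_eq_top_iff (hr : IsTreeOrderRel X r) :
    ancestorAt r x i = ⊤ ↔ depth r x < i := by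
  rw [← not_iff_not, not_lt, ← ne_eq, WithTop.ne_top_iff_exists]
  constructor
  · rintro ⟨z, hz⟩
    obtain ⟨hxz, rfl⟩ := (ancestorAt_eq_coe_iff hr).1 hz.symm
    exact depth_le_depth hr hxz
  · intro hi
    obtain ⟨z, hz⟩ := exists_rel_depth_eq hr hi
    exact ⟨z, ((ancestorAt_eq_coe_iff hr).2 hz).symm⟩

lemma ancestorAt_depth_self (hr : IsTreeOrderRel X r) : ancestorAt r x (depth r x) = x :=
  (ancestorAt_eq_coe_iff hr).2 ⟨hr.1.refl x, rfl⟩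

lemma ancestorAt_eq_of_rel (hr : IsTreeOrderRel X r) (hxy : r x y) (hy : ancestorAt r y i = z) :
    ancestorAt r x i = z := by
  rw [ancestorAt_eq_coe_iff hr] at hy ⊢
  exact ⟨hr.1.trans _ _ _ hxy hy.1, hy.2⟩

variable {α : Type*} {e : X → α}

noncomputable def treeKey (r : X → X → Prop) (e : X → α) (x : X) : Lex (ℕ → WithTop α) :=
  toLex fun i => (ancestorAt r x i).map e

lemma treeKey_injective (hr : IsTreeOrderRel X r) (he : Injective e) :
    Injective (treeKey r e) := by
  have hrel : ∀ x y, treeKey r e x = treeKey r e y → r y x := by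
    intro x y hxy
    have h := congrFun (congrArg ofLex hxy) (depth r x)
    simp only [treeKey, ofLex_toLex, ancestorAt_depth_self hr, WithTop.map_coe] at h
    cases hy : ancestorAt r y (depth r x) with
    | top => simp [hy] at h
    | coe z =>
      rw [hy, WithTop.map_coe, WithTop.coe_inj] at h
      exact he h ▸ ((ancestorAt_eq_coe_iff hr).1 hy).1
  exact fun x y hxy => hr.1.antisymm _ _ (hrel y x hxy.symm) (hrel x y hxy)

variable [LinearOrder α]

def treeLinExt (r : X → X → Prop) (e : X → α) : X → X → Prop := InvImage (· ≤ ·) (treeKey r e)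

variable (hr : IsTreeOrderRel X r)
include hr

lemma isLinearOrder_treeLinExt (he : Injective e) : IsLinearOrder X (treeLinExt r e) :=
  isLinearOrder_invImage (treeKey_injective hr he)

lemma treeLinExt_of_rel (hxy : r x y) : treeLinExt r e x y := by
  refine Pi.toLex_monotone fun i => ?_
  cases hy : ancestorAt r y i with
  | top => simp
  | coe z => rw [ancestorAt_eq_of_rel hr hxy hy]

lemma rel_of_treeLinExt_of_treeLinExt_toDual (he : Injective e) (h : treeLinExt r e x y)
    (h' : treeLinExt r (OrderDual.toDual ∘ e) x y) : r x y := by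
  rcases eq_or_ne x y with rfl | hne
  · exact hr.1.refl x
  obtain ⟨i, hagree, hlt⟩ := h.lt_of_ne ((treeKey_injective hr he).ne hne)
  have hanc : ∀ j < i, ancestorAt r x j = ancestorAt r y j :=
    fun j hj => WithTop.map_injective he (hagree j hj)
  have hle' : (ancestorAt r x i).map (OrderDual.toDual ∘ e) ≤
      (ancestorAt r y i).map (OrderDual.toDual ∘ e) :=
    Pi.apply_le_of_toLex h' fun j hj => by simp only [hanc j hj]
  cases hy : ancestorAt r y i with
  | top =>
    rw [ancestorAt_eq_top_iff hr] at hy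
    have hyx := hanc _ hy
    rw [ancestorAt_depth_self hr] at hyx
    exact ((ancestorAt_eq_coe_iff hr).1 hyx).1
  | coe b =>
    cases hx : ancestorAt r x i with
    | top => simp [treeKey, hx, hy] at hlt
    | coe a =>
      simp only [treeKey, Pi.toLex_apply, hx, hy, WithTop.map_coe, WithTop.coe_lt_coe,
        WithTop.coe_le_coe, comp_apply, OrderDual.toDual_le_toDual] at hlt hle'
      exact absurd hlt hle'.not_gt

end TreeKey

lemma OrderDimLE.of_equiv {X ι : Type*} [PartialOrder X] {m : ℕ} (σ : ι ≃ Fin m)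
    (L : ι → X → X → Prop) (hL : ∀ i, IsLinearOrder X (L i))
    (hle : ∀ x y : X, x ≤ y ↔ ∀ i, L i x y) : OrderDimLE X m :=
  ⟨fun j => L (σ.symm j), fun _ => hL _, fun x y => (hle x y).trans σ.symm.forall_congr_right.symm⟩

theorem TreeDimLE.orderDimLE {X : Type*} [Fintype X] [PartialOrder X] {k : ℕ}
    (h : TreeDimLE X k) : OrderDimLE X (2 * k) := by
  obtain ⟨r, hr, hle⟩ := h
  let e := Fintype.equivFin X
  have he' : Injective (OrderDual.toDual ∘ e) := OrderDual.toDual.injective.comp e.injective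
  refine OrderDimLE.of_equiv (finSumFinEquiv.trans (finCongr (two_mul k).symm))
    (Sum.elim (fun i => treeLinExt (r i) e) (fun i => treeLinExt (r i) (OrderDual.toDual ∘ e)))
    (Sum.rec (fun i => isLinearOrder_treeLinExt (hr i) e.injective)
      (fun i => isLinearOrder_treeLinExt (hr i) he')) fun x y => ?_
  rw [hle, Sum.forall, ← forall_and]
  exact forall_congr' fun i => ⟨fun h => ⟨treeLinExt_of_rel (hr i) h, treeLinExt_of_rel (hr i) h⟩,
    fun h => rel_of_treeLinExt_of_treeLinExt_toDual (hr i) e.injective h.1 h.2⟩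

theorem OrderDimLE.embedsIn {X : Type*} [Fintype X] [PartialOrder X] {m : ℕ}
    (h : OrderDimLE X m) : EmbedsIn X (Fin m → Fin (Fintype.card X)) := by
  obtain ⟨L, hL, hle⟩ := h
  let f : X → Fin m → Fin (Fintype.card X) := fun x j => ⟨relRank (L j) x, relRank_lt_card _ _⟩
  have hf : ∀ x y, x ≤ y ↔ f x ≤ f y := fun x y => by
    simp only [hle, Pi.le_def, f, Fin.mk_le_mk, relRank_le_relRank_iff (hR := hL _)]
  exact ⟨f, fun x y hxy => le_antisymm ((hf x y).2 hxy.le) ((hf y x).2 hxy.ge), hf⟩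

theorem tree_dim_le_k_dim_le_two_k_general (n k : ℕ)
    (X : Type) [Fintype X] [PartialOrder X]
    (hcard : Fintype.card X = n) (h : TreeDimLE X k) :
    OrderDimLE X (2 * k) ∧ EmbedsIn X (Fin (2 * k) → Fin n) := by
  subst hcard
  exact ⟨h.orderDimLE, h.orderDimLE.embedsIn⟩

/-- An `n`-element poset of tree-dimension at most `k` has order dimension at
most `2k`, and consequently embeds as an induced suborder into the
componentwise-ordered power `(Fin n)^(2k)` (of size `n^(2k)`). -/
theorem tree_dim_le_k_dim_le_two_k (n k : ℕ) (hk : 1 ≤ k) (hn : 1 ≤ n)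
    (X : Type) [Fintype X] [PartialOrder X]
    (hcard : Fintype.card X = n) (h : TreeDimLE X k) :
    OrderDimLE X (2 * k) ∧ EmbedsIn X (Fin (2 * k) → Fin n) :=
  tree_dim_le_k_dim_le_two_k_general n k X hcard h
end
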